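/- arXiv:1304.1580 — 10 statements merged into one kernel-verified Lean document; each statement's English description precedes it below -/
import Mathlib

section
/- Let λ be a nonzero finite measure on the unit sphere S of ℝ^d. For a ∈ ℝ^d, a belongs to the linear span of the support of λ if and only if a = ∫_S ξ f(ξ) dλ(ξ) for some bounded measurable function f : S → ℝ. -/
/-!
Both sides are subspaces of a finite-dimensional space, so it suffices to compare their orthogonal
complements. A vector `u` is orthogonal to the support of `λ` iff `⟪u, ξ⟫ = 0` for `λ`-a.e. `ξ`,
because the support is conull and lies in every closed conull set. It is orthogonal to every
`∫ f(ξ) ξ dλ(ξ)` iff `∫_s ⟪u, ξ⟫ dλ = 0` for every measurable `s` (take `f = 1_s`), which again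
means `⟪u, ξ⟫ = 0` almost everywhere.
-/

open MeasureTheory Filter Set

noncomputable section

/-- The topological support of a measure: points all of whose open
neighborhoods have positive measure. -/
def measureSupport {X : Type*} [TopologicalSpace X] [MeasurableSpace X]
    (μ : Measure X) : Set X :=
  {x | ∀ U : Set X, IsOpen U → x ∈ U → 0 < μ U}

theorem measureSupport_eq_support {X : Type*} [TopologicalSpace X] [MeasurableSpace X]
    (μ : Measure X) : measureSupport μ = μ.support := by
  simp only [measureSupport, Measure.support_eq_forall_isOpen]
  ext x
  exact forall_congr' fun U => forall_comm

open RealInnerProductSpace Submodule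

section BoundedMoments

variable {E : Type*} [NormedAddCommGroup E] [InnerProductSpace ℝ E]
  [MeasurableSpace E] {μ : Measure E}

theorem mem_orthogonal_span_support_iff [HereditarilyLindelofSpace E] (u : E) :
    u ∈ (span ℝ μ.support)ᗮ ↔ ∀ᵐ ξ ∂μ, ⟪u, ξ⟫ = 0 := by
  constructor
  · intro hu
    filter_upwards [Measure.support_mem_ae] with ξ hξ
    exact (mem_orthogonal' _ u).mp hu ξ (subset_span hξ)
  · intro hu
    have hsupp : μ.support ⊆ (ℝ ∙ u)ᗮ :=
      Measure.support_subset_of_isClosed (isClosed_orthogonal _) <|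
        hu.mono fun _ => mem_orthogonal_singleton_iff_inner_right.mpr
    exact (mem_orthogonal' _ u).mpr fun v hv =>
      mem_orthogonal_singleton_iff_inner_right.mp (span_le.mpr hsupp hv)

variable (μ) in
/-- Integrability of the identity is what makes these vectors closed under addition. -/
def boundedMomentSubmodule (hμ : Integrable (fun ξ => ξ) μ) : Submodule ℝ E where
  carrier := {a | ∃ f : E → ℝ, Measurable f ∧ (∃ C : ℝ, ∀ᵐ ξ ∂μ, |f ξ| ≤ C) ∧
    a = ∫ ξ, f ξ • ξ ∂μ}
  zero_mem' := ⟨0, measurable_const, ⟨0, ae_of_all _ (by simp)⟩, by simp⟩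
  add_mem' := by
    rintro _ _ ⟨f, hf, ⟨Cf, hCf⟩, rfl⟩ ⟨g, hg, ⟨Cg, hCg⟩, rfl⟩
    refine ⟨f + g, hf.add hg, ⟨Cf + Cg, ?_⟩, ?_⟩
    · filter_upwards [hCf, hCg] with ξ h1 h2
      exact (abs_add_le _ _).trans (add_le_add h1 h2)
    · simp only [Pi.add_apply, add_smul]
      exact (integral_add (hμ.bdd_smul Cf hf.aestronglyMeasurable hCf)
        (hμ.bdd_smul Cg hg.aestronglyMeasurable hCg)).symm
  smul_mem' := by
    rintro c _ ⟨f, hf, ⟨C, hC⟩, rfl⟩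
    refine ⟨fun ξ => c * f ξ, measurable_const.mul hf, ⟨|c| * C, ?_⟩, ?_⟩
    · filter_upwards [hC] with ξ h
      rw [abs_mul]
      exact mul_le_mul_of_nonneg_left h (abs_nonneg c)
    · simp only [mul_smul, integral_smul]

theorem setIntegral_mem_boundedMomentSubmodule (hμ : Integrable (fun ξ => ξ) μ) {s : Set E}
    (hs : MeasurableSet s) : ∫ ξ in s, ξ ∂μ ∈ boundedMomentSubmodule μ hμ := by
  refine ⟨s.indicator 1, measurable_one.indicator hs, ⟨1, ae_of_all _ fun ξ => ?_⟩, ?_⟩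
  · by_cases h : ξ ∈ s <;> simp [h]
  · rw [← integral_indicator hs]
    congr 1 with ξ
    by_cases h : ξ ∈ s <;> simp [h]

variable [CompleteSpace E]

theorem mem_orthogonal_boundedMomentSubmodule_iff (hμ : Integrable (fun ξ => ξ) μ) (u : E) :
    u ∈ (boundedMomentSubmodule μ hμ)ᗮ ↔ ∀ᵐ ξ ∂μ, ⟪u, ξ⟫ = 0 := by
  rw [mem_orthogonal']
  constructor
  · intro hu
    refine (hμ.const_inner u).ae_eq_zero_of_forall_setIntegral_eq_zero fun s hs _ => ?_
    rw [integral_inner hμ.integrableOn]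
    exact hu _ (setIntegral_mem_boundedMomentSubmodule hμ hs)
  · rintro hu _ ⟨f, hf, ⟨C, hC⟩, rfl⟩
    have hint : Integrable (fun ξ => f ξ • ξ) μ := hμ.bdd_smul C hf.aestronglyMeasurable hC
    rw [← integral_inner hint]
    exact integral_eq_zero_of_ae (hu.mono fun ξ hξ => by simp [real_inner_smul_right, hξ])

theorem span_support_eq_boundedMomentSubmodule [FiniteDimensional ℝ E]
    (hμ : Integrable (fun ξ => ξ) μ) : span ℝ μ.support = boundedMomentSubmodule μ hμ := by
  have h : (span ℝ μ.support)ᗮ = (boundedMomentSubmodule μ hμ)ᗮ := by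
    ext u
    rw [mem_orthogonal_span_support_iff, mem_orthogonal_boundedMomentSubmodule_iff]
  simpa only [orthogonal_orthogonal] using congrArg (fun K : Submodule ℝ E => Kᗮ) h

end BoundedMoments

theorem stmt0_general {d : ℕ}
    (lam : Measure (EuclideanSpace ℝ (Fin d))) [IsFiniteMeasure lam]
    (hsphere : lam (Metric.sphere (0 : EuclideanSpace ℝ (Fin d)) 1)ᶜ = 0)
    (a : EuclideanSpace ℝ (Fin d)) :
    a ∈ Submodule.span ℝ (measureSupport lam) ↔
      ∃ f : EuclideanSpace ℝ (Fin d) → ℝ, Measurable f ∧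
        (∃ C : ℝ, ∀ᵐ ξ ∂lam, |f ξ| ≤ C) ∧
        a = ∫ ξ, f ξ • ξ ∂lam := by
  have hunit : ∀ᵐ ξ ∂lam, ξ ∈ Metric.sphere 0 1 := hsphere
  have hint : Integrable (fun ξ => ξ) lam :=
    .of_bound aestronglyMeasurable_id 1 <|
      hunit.mono fun _ hξ => (mem_sphere_zero_iff_norm.mp hξ).le
  rw [measureSupport_eq_support, span_support_eq_boundedMomentSubmodule hint]
  rfl

/-- for a nonzero finite measure `λ` on the unit sphere of `ℝ^d`,
a vector `a` lies in the linear span of the support of `λ` iff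
`a = ∫_S ξ f(ξ) dλ(ξ)` for some bounded measurable `f`. -/
theorem stmt0 {d : ℕ}
    (lam : Measure (EuclideanSpace ℝ (Fin d))) [IsFiniteMeasure lam]
    (hne : lam ≠ 0)
    (hsphere : lam (Metric.sphere (0 : EuclideanSpace ℝ (Fin d)) 1)ᶜ = 0)
    (a : EuclideanSpace ℝ (Fin d)) :
    a ∈ Submodule.span ℝ (measureSupport lam) ↔
      ∃ f : EuclideanSpace ℝ (Fin d) → ℝ, Measurable f ∧
        (∃ C : ℝ, ∀ᵐ ξ ∂lam, |f ξ| ≤ C) ∧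
        a = ∫ ξ, f ξ • ξ ∂lam :=
  stmt0_general lam hsphere a
end
end

section
/- Let 0 < α < 1 and let V be a random vector in ℝ^d with E|V|^α < ∞. Then the limit lim_{T → ∞} ∫_0^T E[ t^{-1/α} V · 1_{|t^{-1/α} V| ≤ 1} ] dt exists and equals (α/(1-α)) · E[ (V/|V|) · |V|^α ] (with the convention V/|V| = 0 when V = 0). -/
open MeasureTheory Filter Set

noncomputable section

/-- if `0 < α < 1` and `E|V|^α < ∞`, then
`lim_{T→∞} ∫_0^T E[t^{-1/α} V 1_{|t^{-1/α}V| ≤ 1}] dt` exists and equals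
`(α/(1-α)) E[(V/|V|) |V|^α]`. -/
theorem stmt3 {d : ℕ} {Ω : Type*} [MeasurableSpace Ω]
    (P : Measure Ω) [IsProbabilityMeasure P]
    (α : ℝ) (hα0 : 0 < α) (hα1 : α < 1)
    (V : Ω → EuclideanSpace ℝ (Fin d)) (hV : Measurable V)
    (hmom : Integrable (fun ω => ‖V ω‖ ^ α) P) :
    Tendsto (fun T : ℝ =>
        ∫ t in Ioo (0:ℝ) T,
          (t ^ (-(1/α))) • ∫ ω in {ω | ‖V ω‖ ≤ t ^ (1/α)}, V ω ∂P)
      atTop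
      (nhds ((α / (1 - α)) • ∫ ω, (‖V ω‖ ^ α) • (‖V ω‖⁻¹ • V ω) ∂P)) := by
  have hα0' : α ≠ 0 := hα0.ne'
  have h1α : (0:ℝ) < 1 - α := by linarith
  have hp : -(1/α) < -1 := by
    have : (1:ℝ) < 1/α := (one_lt_div hα0).mpr hα1
    linarith
  set c : ℝ := α / (1 - α) with hc_def
  have hc : 0 < c := div_pos hα0 h1α
  -- the product integrand
  set S : Set (ℝ × Ω) := {p : ℝ × Ω | ‖V p.2‖ ≤ p.1 ^ (1/α)} with hS_def
  set F2 : ℝ × Ω → EuclideanSpace ℝ (Fin d) :=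
    S.indicator (fun p => (p.1 ^ (-(1/α))) • V p.2) with hF2_def
  have hSmeas : MeasurableSet S :=
    measurableSet_le (hV.norm.comp measurable_snd)
      (measurable_fst.pow_const _)
  have hF2meas : Measurable F2 :=
    ((measurable_fst.pow_const _).smul (hV.comp measurable_snd)).indicator hSmeas
  -- the slice function after integrating in t
  set g : ℝ → Ω → ℝ :=
    fun T ω => ∫ t in Ico (‖V ω‖ ^ α) T, t ^ (-(1/α)) with hg_def
  -- evaluate the t-integral pointwise in ω
  have hval : ∀ T : ℝ, 0 < T → ∀ ω : Ω,
      (∫ t in Ioo (0:ℝ) T, F2 (t, ω)) = g T ω • V ω := by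
    intro T hT ω
    by_cases hω : V ω = 0
    · have h0 : ∀ t : ℝ, F2 (t, ω) = 0 := by
        intro t
        simp [hF2_def, Set.indicator_apply, hω]
      simp [h0, hω]
    · have hr : 0 < ‖V ω‖ := norm_pos_iff.mpr hω
      have ha : 0 < ‖V ω‖ ^ α := Real.rpow_pos_of_pos hr α
      have hcong : ∀ t ∈ Ioo (0:ℝ) T,
          F2 (t, ω) = (Ici (‖V ω‖ ^ α)).indicator
            (fun t => (t ^ (-(1/α))) • V ω) t := by
        intro t ht
        have hiff : ‖V ω‖ ≤ t ^ (1/α) ↔ ‖V ω‖ ^ α ≤ t := by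
          rw [one_div]
          exact Real.le_rpow_inv_iff_of_pos (norm_nonneg _) ht.1.le hα0
        by_cases h : ‖V ω‖ ^ α ≤ t
        · rw [hF2_def, Set.indicator_of_mem (show (t, ω) ∈ S from hiff.mpr h),
            Set.indicator_of_mem (show t ∈ Ici (‖V ω‖ ^ α) from h)]
        · rw [hF2_def, Set.indicator_of_notMem
              (show (t, ω) ∉ S from fun hh => h (hiff.mp hh)),
            Set.indicator_of_notMem (show t ∉ Ici (‖V ω‖ ^ α) from h)]
      rw [setIntegral_congr_fun measurableSet_Ioo hcong,
        setIntegral_indicator measurableSet_Ici]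
      have hset : Ioo (0:ℝ) T ∩ Ici (‖V ω‖ ^ α) = Ico (‖V ω‖ ^ α) T := by
        ext x
        constructor
        · rintro ⟨⟨_, hxT⟩, hxa⟩; exact ⟨hxa, hxT⟩
        · rintro ⟨hxa, hxT⟩; exact ⟨⟨lt_of_lt_of_le ha hxa, hxT⟩, hxa⟩
      rw [hset, integral_smul_const, hg_def]
  -- integrability on the product space
  have hInt : ∀ T : ℝ, Integrable F2 ((volume.restrict (Ioo (0:ℝ) T)).prod P) := by
    intro T
    haveI : IsFiniteMeasure (volume.restrict (Ioo (0:ℝ) T)) := by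
      constructor
      rw [Measure.restrict_apply_univ]
      exact measure_Ioo_lt_top
    have hbd : ∀ᵐ p ∂((volume.restrict (Ioo (0:ℝ) T)).prod P), ‖F2 p‖ ≤ 1 := by
      have hres : (volume.restrict (Ioo (0:ℝ) T)).prod P
          = (volume.prod P).restrict ((Ioo (0:ℝ) T) ×ˢ (univ : Set Ω)) := by
        rw [← Measure.prod_restrict, Measure.restrict_univ]
      rw [hres]
      filter_upwards [ae_restrict_mem (measurableSet_Ioo.prod MeasurableSet.univ)]
        with p hp
      have hp1 : 0 < p.1 := hp.1.1
      by_cases hmem : p ∈ S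
      · rw [hF2_def, Set.indicator_of_mem hmem, norm_smul,
          Real.norm_of_nonneg (Real.rpow_nonneg hp1.le _)]
        calc p.1 ^ (-(1/α)) * ‖V p.2‖
            ≤ p.1 ^ (-(1/α)) * p.1 ^ (1/α) :=
              mul_le_mul_of_nonneg_left hmem (Real.rpow_nonneg hp1.le _)
          _ = 1 := by
              rw [← Real.rpow_add hp1]
              simp
      · rw [hF2_def, Set.indicator_of_notMem hmem]
        simp
    exact (integrable_const (1:ℝ)).mono' hF2meas.aestronglyMeasurable hbd
  -- Fubini
  have key : ∀ T : ℝ, 0 < T →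
      (∫ t in Ioo (0:ℝ) T,
          (t ^ (-(1/α))) • ∫ ω in {ω | ‖V ω‖ ≤ t ^ (1/α)}, V ω ∂P)
        = ∫ ω, g T ω • V ω ∂P := by
    intro T hT
    have hswap := integral_integral_swap (f := fun t ω => F2 (t, ω))
      (μ := volume.restrict (Ioo (0:ℝ) T)) (ν := P) (hInt T)
    have hL : (∫ t in Ioo (0:ℝ) T,
          (t ^ (-(1/α))) • ∫ ω in {ω | ‖V ω‖ ≤ t ^ (1/α)}, V ω ∂P)
        = ∫ t in Ioo (0:ℝ) T, ∫ ω, F2 (t, ω) ∂P := by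
      refine setIntegral_congr_fun measurableSet_Ioo (fun t _ => ?_)
      have hmeas_t : MeasurableSet {ω | ‖V ω‖ ≤ t ^ (1/α)} :=
        measurableSet_le hV.norm measurable_const
      rw [← integral_indicator hmeas_t, ← integral_smul]
      congr 1
      funext ω
      by_cases h : ‖V ω‖ ≤ t ^ (1/α)
      · rw [Set.indicator_of_mem
            (show ω ∈ {ω | ‖V ω‖ ≤ t ^ (1/α)} from h) V, hF2_def,
          Set.indicator_of_mem (show (t, ω) ∈ S from h)]
      · rw [Set.indicator_of_notMem
            (show ω ∉ {ω | ‖V ω‖ ≤ t ^ (1/α)} from h) V, hF2_def,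
          Set.indicator_of_notMem (show (t, ω) ∉ S from h), smul_zero]
    rw [hL, hswap]
    exact integral_congr_ae (Filter.Eventually.of_forall fun ω => hval T hT ω)
  -- value of the improper integral
  have hlimval : ∀ ω : Ω, V ω ≠ 0 →
      (∫ t in Ioi (‖V ω‖ ^ α), t ^ (-(1/α))) = c * ‖V ω‖ ^ (α - 1) := by
    intro ω hω
    have hr : 0 < ‖V ω‖ := norm_pos_iff.mpr hω
    have ha : 0 < ‖V ω‖ ^ α := Real.rpow_pos_of_pos hr α
    rw [integral_Ioi_rpow_of_lt hp ha, ← Real.rpow_mul hr.le]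
    have h1 : α * (-(1/α) + 1) = α - 1 := by field_simp; ring
    have h2 : -(1/α) + 1 = (α - 1)/α := by field_simp; ring
    rw [h1, h2, hc_def]
    have hα1' : α - 1 ≠ 0 := by linarith
    field_simp
    ring
  -- nonnegativity of g
  have hg_nonneg : ∀ T ω, 0 ≤ g T ω := by
    intro T ω
    rw [hg_def]
    refine setIntegral_nonneg measurableSet_Ico (fun t ht => ?_)
    exact Real.rpow_nonneg
      ((Real.rpow_nonneg (norm_nonneg _) _).trans ht.1) _
  -- upper bound of g
  have hg_le : ∀ T ω, V ω ≠ 0 → g T ω ≤ c * ‖V ω‖ ^ (α - 1) := by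
    intro T ω hω
    have hr : 0 < ‖V ω‖ := norm_pos_iff.mpr hω
    have ha : 0 < ‖V ω‖ ^ α := Real.rpow_pos_of_pos hr α
    have hint : IntegrableOn (fun t : ℝ => t ^ (-(1/α))) (Ioi (‖V ω‖ ^ α)) :=
      integrableOn_Ioi_rpow_of_lt hp ha
    rw [← hlimval ω hω, hg_def]
    simp only
    rw [MeasureTheory.integral_Ico_eq_integral_Ioo]
    refine setIntegral_mono_set hint ?_ ?_
    · exact (ae_restrict_iff' measurableSet_Ioi).2
        (Filter.Eventually.of_forall fun t ht => Real.rpow_nonneg (ha.trans ht).le _)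
    · exact HasSubset.Subset.eventuallyLE (fun t ht => ht.1)
  -- uniform domination
  have hbound : ∀ T ω, ‖g T ω • V ω‖ ≤ c * ‖V ω‖ ^ α := by
    intro T ω
    by_cases hω : V ω = 0
    · rw [hω, smul_zero, norm_zero]
      positivity
    · have hr : 0 < ‖V ω‖ := norm_pos_iff.mpr hω
      rw [norm_smul, Real.norm_of_nonneg (hg_nonneg T ω)]
      calc g T ω * ‖V ω‖ ≤ (c * ‖V ω‖ ^ (α - 1)) * ‖V ω‖ :=
            mul_le_mul_of_nonneg_right (hg_le T ω hω) (norm_nonneg _)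
        _ = c * ‖V ω‖ ^ α := by
            rw [mul_assoc]
            congr 1
            rw [← Real.rpow_add_one hr.ne', sub_add_cancel]
  -- pointwise limit
  have hG : ∀ ω : Ω, Tendsto (fun T => g T ω • V ω) atTop
      (nhds ((c * ‖V ω‖ ^ (α - 1)) • V ω)) := by
    intro ω
    by_cases hω : V ω = 0
    · simp only [hω, smul_zero]
      exact tendsto_const_nhds
    · have hr : 0 < ‖V ω‖ := norm_pos_iff.mpr hω
      have ha : 0 < ‖V ω‖ ^ α := Real.rpow_pos_of_pos hr α
      have hint : IntegrableOn (fun t : ℝ => t ^ (-(1/α))) (Ioi (‖V ω‖ ^ α)) :=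
        integrableOn_Ioi_rpow_of_lt hp ha
      have h1 : Tendsto (fun T : ℝ => ∫ t in (‖V ω‖ ^ α)..T, t ^ (-(1/α))) atTop
          (nhds (∫ t in Ioi (‖V ω‖ ^ α), t ^ (-(1/α)))) :=
        intervalIntegral_tendsto_integral_Ioi _ hint tendsto_id
      have h2 : (fun T : ℝ => ∫ t in (‖V ω‖ ^ α)..T, t ^ (-(1/α))) =ᶠ[atTop]
          (fun T => g T ω) := by
        filter_upwards [eventually_ge_atTop (‖V ω‖ ^ α)] with T hT
        rw [intervalIntegral.integral_of_le hT, hg_def]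
        simp only
        rw [MeasureTheory.integral_Ioc_eq_integral_Ioo,
          MeasureTheory.integral_Ico_eq_integral_Ioo]
      have h3 := h1.congr' h2
      rw [hlimval ω hω] at h3
      exact h3.smul_const (V ω)
  -- rewriting the limit integrand
  have hGeq : ∀ ω : Ω, (c * ‖V ω‖ ^ (α - 1)) • V ω
      = c • ((‖V ω‖ ^ α) • (‖V ω‖⁻¹ • V ω)) := by
    intro ω
    by_cases hω : V ω = 0
    · simp [hω]
    · have hr : 0 < ‖V ω‖ := norm_pos_iff.mpr hω
      rw [smul_smul, smul_smul, mul_assoc]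
      congr 2
      rw [show (‖V ω‖)⁻¹ = ‖V ω‖ ^ (-1 : ℝ) from (Real.rpow_neg_one _).symm,
        ← Real.rpow_add hr]
      ring_nf
  -- a.e. strong measurability
  have hFmeas : ∀ T : ℝ, 0 < T →
      AEStronglyMeasurable (fun ω => g T ω • V ω) P := by
    intro T hT
    have hint := (hInt T).integral_prod_right
    have heq : (fun ω => ∫ t in Ioo (0:ℝ) T, F2 (t, ω))
        = fun ω => g T ω • V ω := funext fun ω => hval T hT ω
    rw [heq] at hint
    exact hint.aestronglyMeasurable
  -- dominated convergence
  have hmain : Tendsto (fun T => ∫ ω, g T ω • V ω ∂P) atTop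
      (nhds (∫ ω, (c * ‖V ω‖ ^ (α - 1)) • V ω ∂P)) := by
    refine tendsto_integral_filter_of_dominated_convergence
      (fun ω => c * ‖V ω‖ ^ α) ?_ ?_ (hmom.const_mul c) ?_
    · filter_upwards [eventually_gt_atTop (0:ℝ)] with T hT
      exact hFmeas T hT
    · exact Filter.Eventually.of_forall fun T =>
        Filter.Eventually.of_forall fun ω => hbound T ω
    · exact Filter.Eventually.of_forall hG
  have hfinal : (∫ ω, (c * ‖V ω‖ ^ (α - 1)) • V ω ∂P)
      = c • ∫ ω, (‖V ω‖ ^ α) • (‖V ω‖⁻¹ • V ω) ∂P := by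
    rw [← integral_smul]
    exact integral_congr_ae (Filter.Eventually.of_forall fun ω => hGeq ω)
  rw [hfinal] at hmain
  refine Tendsto.congr' ?_ hmain
  filter_upwards [eventually_gt_atTop (0:ℝ)] with T hT
  exact (key T hT).symm
end
end

section
/- Let 1 < α < 2 and let V be a random vector in ℝ^d with E|V|^α < ∞ and E V = 0. Then lim_{T → ∞} E[ V · 1_{|V| ≤ T^{1/α}} · ( T^{1 - 1/α} − |V|^{α−1} ) ] = − E[ (V/|V|) |V|^α ]. -/
open MeasureTheory Filter Set

noncomputable section

/-- if `1 < α < 2`, `E|V|^α < ∞` and `EV = 0`, then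
`lim_{T→∞} E[V 1_{|V| ≤ T^{1/α}} (T^{1-1/α} - |V|^{α-1})] = -E[(V/|V|) |V|^α]`. -/
theorem stmt4 {d : ℕ} {Ω : Type*} [MeasurableSpace Ω]
    (P : Measure Ω) [IsProbabilityMeasure P]
    (α : ℝ) (hα1 : 1 < α) (hα2 : α < 2)
    (V : Ω → EuclideanSpace ℝ (Fin d)) (hV : Measurable V)
    (hmom : Integrable (fun ω => ‖V ω‖ ^ α) P)
    (hmean : ∫ ω, V ω ∂P = 0) :
    Tendsto (fun T : ℝ =>
        ∫ ω in {ω | ‖V ω‖ ≤ T ^ (1/α)},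
          (T ^ (1 - 1/α) - ‖V ω‖ ^ (α - 1)) • V ω ∂P)
      atTop
      (nhds (-∫ ω, (‖V ω‖ ^ α) • (‖V ω‖⁻¹ • V ω) ∂P)) := by
  have hα0 : (0:ℝ) < α := by linarith
  have hαne : α ≠ 0 := ne_of_gt hα0
  have hαinv : (0:ℝ) < 1/α := by positivity
  have hα1' : (0:ℝ) ≤ α - 1 := by linarith
  have hnorm : Measurable fun ω => ‖V ω‖ := hV.norm
  set S : ℝ → Set Ω := fun T => {ω | ‖V ω‖ ≤ T ^ (1/α)} with hSdef
  have hS : ∀ T, MeasurableSet (S T) := fun T =>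
    measurableSet_le hnorm measurable_const
  set g : Ω → EuclideanSpace ℝ (Fin d) := fun ω => ‖V ω‖ ^ (α-1) • V ω with hgdef
  have hpow : ∀ ω, ‖V ω‖ ^ (α-1) * ‖V ω‖ = ‖V ω‖ ^ α := by
    intro ω
    rcases eq_or_lt_of_le (norm_nonneg (V ω)) with h | h
    · rw [← h, Real.zero_rpow (by linarith : α - 1 ≠ 0),
        Real.zero_rpow hαne, zero_mul]
    · have : ‖V ω‖ ^ (α-1) * ‖V ω‖ ^ (1:ℝ) = ‖V ω‖ ^ α := by
        rw [← Real.rpow_add h]; norm_num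
      simpa using this
  have hgnorm : ∀ ω, ‖g ω‖ = ‖V ω‖ ^ α := by
    intro ω
    rw [hgdef, norm_smul, Real.norm_eq_abs,
      abs_of_nonneg (Real.rpow_nonneg (norm_nonneg _) _), hpow]
  have hgmeas : AEStronglyMeasurable g P :=
    ((((Real.continuous_rpow_const hα1').measurable).comp hnorm).smul hV).aestronglyMeasurable
  have hgint : Integrable g P := by
    refine Integrable.mono' hmom hgmeas (Eventually.of_forall fun ω => ?_)
    rw [hgnorm]
  have hVint : Integrable V P := by
    refine Integrable.mono' (g := fun ω => 1 + ‖V ω‖ ^ α)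
      ((integrable_const (1:ℝ)).add hmom)
      hV.aestronglyMeasurable (Eventually.of_forall fun ω => ?_)
    show ‖V ω‖ ≤ 1 + ‖V ω‖ ^ α
    rcases le_or_gt ‖V ω‖ 1 with h | h
    · have : (0:ℝ) ≤ ‖V ω‖ ^ α := Real.rpow_nonneg (norm_nonneg _) _
      linarith
    · have h1 : ‖V ω‖ = ‖V ω‖ ^ (1:ℝ) := (Real.rpow_one _).symm
      have h2 : ‖V ω‖ ^ (1:ℝ) ≤ ‖V ω‖ ^ α :=
        Real.rpow_le_rpow_of_exponent_le h.le (by linarith)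
      have h3 : ‖V ω‖ ≤ ‖V ω‖ ^ α := h1.trans_le h2
      exact h3.trans (by linarith)
  -- decomposition
  have hdecomp : ∀ T : ℝ,
      ∫ ω in S T, (T ^ (1 - 1/α) - ‖V ω‖ ^ (α - 1)) • V ω ∂P
        = T ^ (1-1/α) • (∫ ω in S T, V ω ∂P) - ∫ ω in S T, g ω ∂P := by
    intro T
    have h1 : ∀ ω, (T ^ (1 - 1/α) - ‖V ω‖ ^ (α - 1)) • V ω
        = T ^ (1-1/α) • V ω - g ω := fun ω => sub_smul _ _ _
    calc ∫ ω in S T, (T ^ (1 - 1/α) - ‖V ω‖ ^ (α - 1)) • V ω ∂P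
        = ∫ ω in S T, (T ^ (1-1/α) • V ω - g ω) ∂P := by
          exact integral_congr_ae (Eventually.of_forall fun ω => h1 ω)
      _ = (∫ ω in S T, T ^ (1-1/α) • V ω ∂P) - ∫ ω in S T, g ω ∂P :=
          integral_sub ((hVint.smul (T ^ (1-1/α))).restrict) (hgint.restrict)
      _ = T ^ (1-1/α) • (∫ ω in S T, V ω ∂P) - ∫ ω in S T, g ω ∂P := by
          rw [integral_smul]
  -- tendsto of the g-part
  have hB : Tendsto (fun T => ∫ ω in S T, g ω ∂P) atTop (nhds (∫ ω, g ω ∂P)) := by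
    have h := tendsto_integral_filter_of_dominated_convergence
      (μ := P) (F := fun T => (S T).indicator g) (f := g)
      (bound := fun ω => ‖V ω‖ ^ α) (l := atTop)
      (Eventually.of_forall fun T => hgmeas.indicator (hS T))
      (Eventually.of_forall fun T => Eventually.of_forall fun ω => by
        calc ‖(S T).indicator g ω‖ ≤ ‖g ω‖ := norm_indicator_le_norm_self g ω
          _ = ‖V ω‖ ^ α := hgnorm ω)
      hmom
      (Eventually.of_forall fun ω => by
        have hev : ∀ᶠ T in atTop, (S T).indicator g ω = g ω := by
          filter_upwards [(tendsto_rpow_atTop hαinv).eventually_ge_atTop ‖V ω‖]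
            with T hT
          exact indicator_of_mem (show ω ∈ S T from hT) g
        exact Tendsto.congr' (by filter_upwards [hev] with T h; exact h.symm)
          tendsto_const_nhds)
    have heq : ∀ T : ℝ, ∫ ω, (S T).indicator g ω ∂P = ∫ ω in S T, g ω ∂P :=
      fun T => integral_indicator (hS T)
    exact h.congr heq
  -- tail integral of ‖V‖^α tends to 0
  have hC : Tendsto (fun T => ∫ ω in (S T)ᶜ, ‖V ω‖ ^ α ∂P) atTop (nhds 0) := by
    have h := tendsto_integral_filter_of_dominated_convergence
      (μ := P) (F := fun T => ((S T)ᶜ).indicator fun ω => ‖V ω‖ ^ α)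
      (f := fun _ => (0:ℝ)) (bound := fun ω => ‖V ω‖ ^ α) (l := atTop)
      (Eventually.of_forall fun T => hmom.aestronglyMeasurable.indicator (hS T).compl)
      (Eventually.of_forall fun T => Eventually.of_forall fun ω => by
        calc ‖((S T)ᶜ).indicator (fun ω => ‖V ω‖ ^ α) ω‖
            ≤ ‖‖V ω‖ ^ α‖ := norm_indicator_le_norm_self _ ω
          _ = ‖V ω‖ ^ α := by
              rw [Real.norm_eq_abs, abs_of_nonneg (Real.rpow_nonneg (norm_nonneg _) _)])
      hmom
      (Eventually.of_forall fun ω => by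
        have hev : ∀ᶠ T in atTop,
            ((S T)ᶜ).indicator (fun ω => ‖V ω‖ ^ α) ω = 0 := by
          filter_upwards [(tendsto_rpow_atTop hαinv).eventually_ge_atTop ‖V ω‖]
            with T hT
          exact indicator_of_notMem (fun hc => (Set.mem_compl_iff _ _).mp hc (show ω ∈ S T from hT)) _
        exact Tendsto.congr' (by filter_upwards [hev] with T h; exact h.symm)
          tendsto_const_nhds)
    have heq : ∀ T : ℝ, ∫ ω, ((S T)ᶜ).indicator (fun ω => ‖V ω‖ ^ α) ω ∂P
        = ∫ ω in (S T)ᶜ, ‖V ω‖ ^ α ∂P := fun T => integral_indicator (hS T).compl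
    simpa [heq] using h
  -- the first part tends to 0
  have hA : Tendsto (fun T => T ^ (1-1/α) • (∫ ω in S T, V ω ∂P)) atTop
      (nhds (0 : EuclideanSpace ℝ (Fin d))) := by
    refine squeeze_zero_norm' ?_ hC
    filter_upwards [eventually_ge_atTop (0:ℝ)] with T hT0
    have hsplit : ∫ ω in S T, V ω ∂P = - ∫ ω in (S T)ᶜ, V ω ∂P := by
      have h := integral_add_compl (hS T) hVint
      rw [hmean] at h
      exact eq_neg_of_add_eq_zero_left h
    have hrp : (0:ℝ) ≤ T ^ (1-1/α) := Real.rpow_nonneg hT0 _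
    calc ‖T ^ (1-1/α) • (∫ ω in S T, V ω ∂P)‖
        = T ^ (1-1/α) * ‖∫ ω in (S T)ᶜ, V ω ∂P‖ := by
          rw [hsplit, norm_smul, Real.norm_eq_abs, abs_of_nonneg hrp, norm_neg]
      _ ≤ T ^ (1-1/α) * ∫ ω in (S T)ᶜ, ‖V ω‖ ∂P :=
          mul_le_mul_of_nonneg_left (norm_integral_le_integral_norm _) hrp
      _ = ∫ ω in (S T)ᶜ, T ^ (1-1/α) * ‖V ω‖ ∂P := (integral_const_mul _ _).symm
      _ ≤ ∫ ω in (S T)ᶜ, ‖V ω‖ ^ α ∂P := by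
          refine setIntegral_mono_on
            ((hVint.norm.const_mul _).restrict) (hmom.restrict) (hS T).compl ?_
          intro ω hω
          have hlt : T ^ (1/α) < ‖V ω‖ :=
            not_le.mp (show ¬ ‖V ω‖ ≤ T ^ (1/α) from hω)
          have h1 : T ^ (1-1/α) = (T ^ (1/α)) ^ (α-1) := by
            rw [← Real.rpow_mul hT0]
            congr 1
            field_simp
          have h2 : (T ^ (1/α)) ^ (α-1) ≤ ‖V ω‖ ^ (α-1) :=
            Real.rpow_le_rpow (Real.rpow_nonneg hT0 _) hlt.le hα1'
          calc T ^ (1-1/α) * ‖V ω‖ ≤ ‖V ω‖ ^ (α-1) * ‖V ω‖ :=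
                mul_le_mul_of_nonneg_right (h1 ▸ h2) (norm_nonneg _)
            _ = ‖V ω‖ ^ α := hpow ω
  -- identify the target
  have htarget : ∫ ω, (‖V ω‖ ^ α) • (‖V ω‖⁻¹ • V ω) ∂P = ∫ ω, g ω ∂P := by
    refine integral_congr_ae (Eventually.of_forall fun ω => ?_)
    rcases eq_or_lt_of_le (norm_nonneg (V ω)) with h | h
    · have hv : V ω = 0 := by simpa using h.symm
      simp [hgdef, hv]
    · show (‖V ω‖ ^ α) • (‖V ω‖⁻¹ • V ω) = ‖V ω‖ ^ (α-1) • V ω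
      rw [smul_smul]
      congr 1
      rw [← Real.rpow_neg_one ‖V ω‖, ← Real.rpow_add h]
      ring_nf
  have hfinal := hA.sub hB
  rw [zero_sub] at hfinal
  rw [show (-∫ ω, (‖V ω‖ ^ α) • (‖V ω‖⁻¹ • V ω) ∂P) = -∫ ω, g ω ∂P from by
    rw [htarget]]
  exact hfinal.congr fun T => (hdecomp T).symm
end
end

section
/- Let 1 < α < 2 and let V be a random vector in ℝ^d with E|V|^α < ∞. If the limit a = lim_{T → ∞} E[ V · 1_{|V| ≤ T^{1/α}} · ( T^{1−1/α} − |V|^{α−1} ) ] exists in ℝ^d, then E V = 0. -/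
open MeasureTheory Filter Set

noncomputable section

/-- if `1 < α < 2`, `E|V|^α < ∞` and the limit
`a = lim_{T→∞} E[V 1_{|V| ≤ T^{1/α}} (T^{1-1/α} - |V|^{α-1})]` exists, then `EV = 0`. -/
theorem stmt5 {d : ℕ} {Ω : Type*} [MeasurableSpace Ω]
    (P : Measure Ω) [IsProbabilityMeasure P]
    (α : ℝ) (hα1 : 1 < α) (hα2 : α < 2)
    (V : Ω → EuclideanSpace ℝ (Fin d)) (hV : Measurable V)
    (hmom : Integrable (fun ω => ‖V ω‖ ^ α) P)
    (hlim : ∃ a : EuclideanSpace ℝ (Fin d),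
      Tendsto (fun T : ℝ =>
          ∫ ω in {ω | ‖V ω‖ ≤ T ^ (1/α)},
            (T ^ (1 - 1/α) - ‖V ω‖ ^ (α - 1)) • V ω ∂P)
        atTop (nhds a)) :
    ∫ ω, V ω ∂P = 0 := by
  obtain ⟨a, ha⟩ := hlim
  have hα0 : 0 < α := lt_trans one_pos hα1
  have hexp : 0 < 1 - 1/α := by
    have : 1/α < 1 := by rw [div_lt_one hα0]; exact hα1
    linarith
  have hVae : AEStronglyMeasurable V P := hV.aestronglyMeasurable
  -- integrability of V
  have hVint : Integrable V P := by
    refine ((integrable_const (1:ℝ)).add hmom).mono hVae (ae_of_all _ fun ω => ?_)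
    have h1 : (0:ℝ) ≤ ‖V ω‖ ^ α := Real.rpow_nonneg (norm_nonneg _) _
    rcases le_or_gt (‖V ω‖) 1 with h | h
    · calc ‖V ω‖ ≤ 1 := h
        _ ≤ 1 + ‖V ω‖ ^ α := by linarith
        _ ≤ ‖(1:ℝ) + ‖V ω‖ ^ α‖ := le_abs_self _
    · have h2 : ‖V ω‖ ≤ ‖V ω‖ ^ α := by
        nth_rewrite 1 [← Real.rpow_one (‖V ω‖)]
        exact Real.rpow_le_rpow_of_exponent_le h.le hα1.le
      calc ‖V ω‖ ≤ ‖V ω‖ ^ α := h2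
        _ ≤ 1 + ‖V ω‖ ^ α := by linarith
        _ ≤ ‖(1:ℝ) + ‖V ω‖ ^ α‖ := le_abs_self _
  -- the function W
  set W : Ω → EuclideanSpace ℝ (Fin d) := fun ω => ‖V ω‖ ^ (α - 1) • V ω with hWdef
  have hWnorm : ∀ ω, ‖W ω‖ = ‖V ω‖ ^ α := by
    intro ω
    rw [hWdef]
    simp only
    rw [norm_smul, Real.norm_eq_abs, abs_of_nonneg (Real.rpow_nonneg (norm_nonneg _) _)]
    nth_rewrite 2 [← Real.rpow_one (‖V ω‖)]
    rw [← Real.rpow_add' (norm_nonneg _) (by linarith : α - 1 + 1 ≠ 0)]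
    ring_nf
  have hWmeas : Measurable W := (((Real.continuous_rpow_const (by linarith : (0:ℝ) ≤ α - 1)).measurable).comp hV.norm).smul hV
  have hWint : Integrable W P := by
    refine hmom.mono' hWmeas.aestronglyMeasurable (ae_of_all _ fun ω => ?_)
    rw [hWnorm ω]
  -- measurability of the truncation sets
  have hmeasS : ∀ T : ℝ, MeasurableSet {ω | ‖V ω‖ ≤ T ^ (1/α)} :=
    fun T => hV.norm measurableSet_Iic
  have hTpow : Tendsto (fun T : ℝ => T ^ (1/α)) atTop atTop :=
    tendsto_rpow_atTop (by positivity)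
  -- general convergence of truncated integrals
  have conv : ∀ f : Ω → EuclideanSpace ℝ (Fin d), Integrable f P →
      Tendsto (fun T : ℝ => ∫ ω in {ω | ‖V ω‖ ≤ T ^ (1/α)}, f ω ∂P) atTop
        (nhds (∫ ω, f ω ∂P)) := by
    intro f hf
    have h := tendsto_integral_filter_of_dominated_convergence (μ := P)
      (l := atTop) (F := fun T : ℝ => ({ω | ‖V ω‖ ≤ T ^ (1/α)}).indicator f) (f := f)
      (bound := fun ω => ‖f ω‖)
      (Eventually.of_forall fun T => hf.aestronglyMeasurable.indicator (hmeasS T))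
      (Eventually.of_forall fun T => ae_of_all _ fun ω => norm_indicator_le_norm_self f ω)
      hf.norm
      (ae_of_all _ fun ω => by
        apply tendsto_const_nhds.congr'
        filter_upwards [hTpow.eventually_ge_atTop (‖V ω‖)] with T hT
        exact (Set.indicator_of_mem (show ω ∈ {ω | ‖V ω‖ ≤ T ^ (1/α)} from hT) f).symm)
    refine h.congr fun T => ?_
    exact integral_indicator (hmeasS T)
  have hG : Tendsto (fun T : ℝ => ∫ ω in {ω | ‖V ω‖ ≤ T ^ (1/α)}, V ω ∂P) atTop
      (nhds (∫ ω, V ω ∂P)) := conv V hVint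
  have hH : Tendsto (fun T : ℝ => ∫ ω in {ω | ‖V ω‖ ≤ T ^ (1/α)}, W ω ∂P) atTop
      (nhds (∫ ω, W ω ∂P)) := conv W hWint
  -- decomposition for each T
  have hdecomp : ∀ T : ℝ,
      (∫ ω in {ω | ‖V ω‖ ≤ T ^ (1/α)},
          (T ^ (1 - 1/α) - ‖V ω‖ ^ (α - 1)) • V ω ∂P)
        + (∫ ω in {ω | ‖V ω‖ ≤ T ^ (1/α)}, W ω ∂P)
        = (T ^ (1 - 1/α)) • ∫ ω in {ω | ‖V ω‖ ≤ T ^ (1/α)}, V ω ∂P := by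
    intro T
    have h1 : (∫ ω in {ω | ‖V ω‖ ≤ T ^ (1/α)},
        (T ^ (1 - 1/α) - ‖V ω‖ ^ (α - 1)) • V ω ∂P)
        = (∫ ω in {ω | ‖V ω‖ ≤ T ^ (1/α)},
            ((T ^ (1 - 1/α)) • V ω - W ω) ∂P) := by
      refine setIntegral_congr_fun (hmeasS T) fun ω _ => ?_
      simp only [sub_smul, hWdef]
    have hsub := integral_sub (μ := P.restrict {ω | ‖V ω‖ ≤ T ^ (1/α)})
      (f := fun ω => (T ^ (1 - 1/α)) • V ω) (g := W)
      ((hVint.integrableOn).smul (T ^ (1 - 1/α))) hWint.integrableOn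
    rw [h1, hsub, integral_smul]
    abel
  -- limits
  have h1 : Tendsto (fun T : ℝ =>
      (∫ ω in {ω | ‖V ω‖ ≤ T ^ (1/α)},
          (T ^ (1 - 1/α) - ‖V ω‖ ^ (α - 1)) • V ω ∂P)
        + (∫ ω in {ω | ‖V ω‖ ≤ T ^ (1/α)}, W ω ∂P)) atTop
      (nhds (a + ∫ ω, W ω ∂P)) := ha.add hH
  have h2 : Tendsto (fun T : ℝ => (T ^ (1 - 1/α))⁻¹) atTop (nhds 0) :=
    (tendsto_rpow_atTop hexp).inv_tendsto_atTop
  have h3 := h2.smul h1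
  rw [zero_smul] at h3
  have h4 : Tendsto (fun T : ℝ => ∫ ω in {ω | ‖V ω‖ ≤ T ^ (1/α)}, V ω ∂P) atTop
      (nhds 0) := by
    apply h3.congr'
    filter_upwards [eventually_ge_atTop (1:ℝ)] with T hT
    have hTpos : (0:ℝ) < T ^ (1 - 1/α) := Real.rpow_pos_of_pos (by linarith) _
    rw [hdecomp T, smul_smul, inv_mul_cancel₀ hTpos.ne', one_smul]
  exact tendsto_nhds_unique hG h4
end
end

section
/- Let V be a random vector in ℝ^d with E|V| < ∞. If the limit a = lim_{T → ∞} E[ V · 1_{|V| ≤ T} · log(T/|V|) ] exists in ℝ^d, then E V = 0. -/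
open MeasureTheory Filter Set

noncomputable section

/-- if `E|V| < ∞` and the limit
`a = lim_{T→∞} E[V 1_{|V| ≤ T} log(T/|V|)]` exists, then `EV = 0`. -/
theorem stmt6 {d : ℕ} {Ω : Type*} [MeasurableSpace Ω]
    (P : Measure Ω) [IsProbabilityMeasure P]
    (V : Ω → EuclideanSpace ℝ (Fin d)) (hV : Measurable V)
    (hint : Integrable V P)
    (hlim : ∃ a : EuclideanSpace ℝ (Fin d),
      Tendsto (fun T : ℝ =>
          ∫ ω in {ω | ‖V ω‖ ≤ T}, (Real.log (T / ‖V ω‖)) • V ω ∂P)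
        atTop (nhds a)) :
    ∫ ω, V ω ∂P = 0 := by
  obtain ⟨a, ha⟩ := hlim
  have hVm : Measurable fun ω => ‖V ω‖ := hV.norm
  set A : ℝ → Set Ω := fun T => {ω | ‖V ω‖ ≤ T} with hA
  have hAmeas : ∀ T : ℝ, MeasurableSet (A T) := fun T => hVm measurableSet_Iic
  have hmeas : ∀ T : ℝ, Measurable fun ω => Real.log (T / ‖V ω‖) • V ω := fun T =>
    (Real.measurable_log.comp (measurable_const.div hVm)).smul hV
  have haux : ∀ T : ℝ, IntegrableOn (fun ω => Real.log (T / ‖V ω‖) • V ω) (A T) P := by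
    intro T
    refine Integrable.mono' (integrable_const (max T 0)) (hmeas T).aestronglyMeasurable ?_
    refine (ae_restrict_iff' (hAmeas T)).2 (ae_of_all _ fun ω hω => ?_)
    rcases eq_or_lt_of_le (norm_nonneg (V ω)) with h0 | h0
    · have hz : V ω = 0 := norm_eq_zero.1 h0.symm
      simp [hz, le_max_iff]
    · have hω' : ‖V ω‖ ≤ T := hω
      have hT : 0 < T := lt_of_lt_of_le h0 hω'
      have hdivpos : 0 < T / ‖V ω‖ := div_pos hT h0
      have hlog0 : 0 ≤ Real.log (T / ‖V ω‖) :=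
        Real.log_nonneg ((one_le_div h0).2 hω')
      rw [norm_smul, Real.norm_eq_abs, abs_of_nonneg hlog0]
      calc Real.log (T / ‖V ω‖) * ‖V ω‖ ≤ (T / ‖V ω‖) * ‖V ω‖ :=
            mul_le_mul_of_nonneg_right (Real.log_le_self hdivpos.le) (norm_nonneg _)
        _ = T := div_mul_cancel₀ T h0.ne'
        _ ≤ max T 0 := le_max_left _ _
  set f : ℝ → EuclideanSpace ℝ (Fin d) :=
    fun T => ∫ ω in A T, Real.log (T / ‖V ω‖) • V ω ∂P with hf
  have hfa : Tendsto f atTop (nhds a) := ha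
  have hsub : ∀ T : ℝ, 0 < T → A T ⊆ A (2 * T) := by
    intro T hT ω hω
    have hω' : ‖V ω‖ ≤ T := hω
    show ‖V ω‖ ≤ 2 * T
    linarith
  have hsplit : ∀ T : ℝ, 0 < T →
      f (2 * T) - f T = Real.log 2 • (∫ ω in A T, V ω ∂P) +
        ∫ ω in A (2 * T) \ A T, Real.log (2 * T / ‖V ω‖) • V ω ∂P := by
    intro T hT
    have hU : A T ∪ (A (2 * T) \ A T) = A (2 * T) := union_diff_cancel (hsub T hT)
    have hdisj : Disjoint (A T) (A (2 * T) \ A T) := disjoint_sdiff_right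
    have h1 : f (2 * T) = (∫ ω in A T, Real.log (2 * T / ‖V ω‖) • V ω ∂P) +
        ∫ ω in A (2 * T) \ A T, Real.log (2 * T / ‖V ω‖) • V ω ∂P := by
      have hsu := setIntegral_union (f := fun ω => Real.log (2 * T / ‖V ω‖) • V ω)
        (μ := P) hdisj ((hAmeas (2 * T)).diff (hAmeas T))
        ((haux (2 * T)).mono_set (hsub T hT)) ((haux (2 * T)).mono_set diff_subset)
      rw [hU] at hsu
      exact hsu
    have h2 : (∫ ω in A T, Real.log (2 * T / ‖V ω‖) • V ω ∂P)
        = Real.log 2 • (∫ ω in A T, V ω ∂P) + f T := by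
      have hptw : ∀ ω, Real.log (2 * T / ‖V ω‖) • V ω
          = Real.log 2 • V ω + Real.log (T / ‖V ω‖) • V ω := by
        intro ω
        rcases eq_or_lt_of_le (norm_nonneg (V ω)) with h0 | h0
        · have hz : V ω = 0 := norm_eq_zero.1 h0.symm
          simp [hz]
        · have hrw : (2 * T) / ‖V ω‖ = 2 * (T / ‖V ω‖) := by ring
          rw [hrw, Real.log_mul (by norm_num) (div_pos hT h0).ne', add_smul]
      simp only [hptw]
      have hi1 : IntegrableOn (fun ω => Real.log 2 • V ω) (A T) P :=
        (hint.integrableOn).smul (Real.log 2)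
      rw [integral_add hi1 (haux T), integral_smul]
    rw [h1, h2]
    abel
  have hmono : Tendsto (fun T : ℝ => ∫ ω in A T, V ω ∂P) atTop (nhds (∫ ω, V ω ∂P)) := by
    have hrw : ∀ T : ℝ, (∫ ω in A T, V ω ∂P) = ∫ ω, (A T).indicator V ω ∂P := fun T =>
      (integral_indicator (hAmeas T)).symm
    simp only [hrw]
    refine tendsto_integral_filter_of_dominated_convergence (fun ω => ‖V ω‖)
      (Eventually.of_forall fun T => hint.1.indicator (hAmeas T))
      (Eventually.of_forall fun T => ae_of_all _ fun ω => norm_indicator_le_norm_self V ω)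
      hint.norm (ae_of_all _ fun ω => ?_)
    refine tendsto_const_nhds.congr' ?_
    filter_upwards [eventually_ge_atTop ‖V ω‖] with T hT
    exact (indicator_of_mem (show ω ∈ A T from hT) V).symm
  have hdiffl : Tendsto (fun T : ℝ =>
      ∫ ω in A (2 * T) \ A T, Real.log (2 * T / ‖V ω‖) • V ω ∂P) atTop (nhds 0) := by
    have hrw : ∀ T : ℝ, (∫ ω in A (2 * T) \ A T, Real.log (2 * T / ‖V ω‖) • V ω ∂P)
        = ∫ ω, ((A (2 * T) \ A T).indicator fun ω => Real.log (2 * T / ‖V ω‖) • V ω) ω ∂P :=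
      fun T => (integral_indicator ((hAmeas (2 * T)).diff (hAmeas T))).symm
    simp only [hrw]
    have h0 : (0 : EuclideanSpace ℝ (Fin d)) =
        ∫ _ω, (0 : EuclideanSpace ℝ (Fin d)) ∂P := by simp
    rw [h0]
    refine tendsto_integral_filter_of_dominated_convergence (fun ω => Real.log 2 * ‖V ω‖)
      (Eventually.of_forall fun T =>
        ((hmeas (2 * T)).indicator ((hAmeas (2 * T)).diff (hAmeas T))).aestronglyMeasurable)
      ?_ (hint.norm.const_mul _) (ae_of_all _ fun ω => ?_)
    · filter_upwards [eventually_gt_atTop (0 : ℝ)] with T hT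
      refine ae_of_all _ fun ω => ?_
      by_cases hω : ω ∈ A (2 * T) \ A T
      · rw [indicator_of_mem hω]
        obtain ⟨h2T, hnT⟩ := hω
        have h2T' : ‖V ω‖ ≤ 2 * T := h2T
        have hx : T < ‖V ω‖ := lt_of_not_ge hnT
        have hxpos : 0 < ‖V ω‖ := hT.trans hx
        have hd1 : (1 : ℝ) ≤ 2 * T / ‖V ω‖ := (one_le_div hxpos).2 h2T'
        have hd2 : 2 * T / ‖V ω‖ ≤ 2 := by
          rw [div_le_iff₀ hxpos]; nlinarith
        rw [norm_smul, Real.norm_eq_abs, abs_of_nonneg (Real.log_nonneg hd1)]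
        exact mul_le_mul (Real.log_le_log (by linarith) hd2) le_rfl (norm_nonneg _)
          (Real.log_nonneg one_le_two)
      · rw [indicator_of_notMem hω]
        simp only [norm_zero]
        exact mul_nonneg (Real.log_nonneg one_le_two) (norm_nonneg _)
    · refine tendsto_const_nhds.congr' ?_
      filter_upwards [eventually_ge_atTop ‖V ω‖] with T hT
      have hnot : ω ∉ A (2 * T) \ A T := fun h => h.2 hT
      exact (indicator_of_notMem hnot _).symm
  have hmul2 : Tendsto (fun T : ℝ => 2 * T) atTop atTop :=
    Tendsto.const_mul_atTop two_pos tendsto_id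
  have hfd : Tendsto (fun T => f (2 * T) - f T) atTop (nhds (a - a)) :=
    (hfa.comp hmul2).sub hfa
  rw [sub_self] at hfd
  have hsum : Tendsto (fun T => f (2 * T) - f T) atTop
      (nhds (Real.log 2 • (∫ ω, V ω ∂P) + 0)) := by
    refine Tendsto.congr' ?_ ((hmono.const_smul (Real.log 2)).add hdiffl)
    filter_upwards [eventually_gt_atTop (0 : ℝ)] with T hT
    exact (hsplit T hT).symm
  rw [add_zero] at hsum
  have hkey := tendsto_nhds_unique hfd hsum
  have hlog : Real.log 2 ≠ 0 := (Real.log_pos one_lt_two).ne'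
  rcases smul_eq_zero.1 hkey.symm with h | h
  · exact absurd h hlog
  · exact h
end
end

section
/- Let 0 < α < 2 and let ν be a Borel measure on ℝ^d \ {0}. Define ν̃(B) = ∫_0^∞ ν({x : t^{-1/α} x ∈ B}) dt for Borel sets B ⊆ ℝ^d \ {0}. Then ν̃(B) = ∫_{ℝ^d} ∫_0^∞ 1_B( r · x/|x| ) · α r^{−α−1} |x|^α dr dν(x); in particular, for 0 < a < b and a Borel set C ⊆ S, ν̃({rξ : r ∈ (a,b], ξ ∈ C}) = (a^{−α} − b^{−α}) · ∫_{ℝ^d} 1_C(x/|x|) |x|^α dν(x). -/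
/-!
By Tonelli the `t`-integral may be taken inside the `ν`-integral. For fixed `x ≠ 0` the
substitution `t = ‖x‖^α r^(-α)` turns `t^(-1/α) • x` into `r • (x / ‖x‖)`, with Jacobian
`α r^(-α-1) ‖x‖^α`. For the polar sector `{r ξ : r ∈ (a, b], ξ ∈ C}` with `C` in the unit sphere,
the indicator of `r • (x / ‖x‖)` splits as `1_(a,b](r) · 1_C(x / ‖x‖)`, and
`∫_a^b α r^(-α-1) dr = a^(-α) - b^(-α)`.
-/

open MeasureTheory Set
open scoped ENNReal

theorem lintegral_Ioi_comp_mul_rpow_neg_inv {α c : ℝ} (hα : 0 < α) (hc : 0 < c)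
    (g : ℝ → ℝ≥0∞) :
    ∫⁻ t in Ioi 0, g (c * t ^ (-(1 / α))) =
      ∫⁻ r in Ioi 0, ENNReal.ofReal (α * r ^ (-α - 1) * c ^ α) * g r := by
  set f : ℝ → ℝ := fun r => c ^ α * r ^ (-α)
  set f_inv : ℝ → ℝ := fun t => c * t ^ (-(1 / α))
  have hinv : InvOn f_inv f (Ioi 0) (Ioi 0) := by
    constructor
    · intro r (hr : 0 < r)
      simp only [f, f_inv]
      rw [Real.mul_rpow (by positivity) (by positivity), ← Real.rpow_mul hc.le,
        ← Real.rpow_mul hr.le]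
      field_simp
      simp [Real.rpow_neg_one, Real.rpow_one, hc.ne']
    · intro t (ht : 0 < t)
      simp only [f, f_inv]
      rw [Real.mul_rpow hc.le (by positivity), ← Real.rpow_mul ht.le, ← mul_assoc,
        ← Real.rpow_add hc]
      field_simp
      simp
  have hbij : BijOn f (Ioi 0) (Ioi 0) :=
    hinv.bijOn (fun r (hr : 0 < r) => show 0 < f r by positivity)
      (fun t (ht : 0 < t) => show 0 < f_inv t by positivity)
  have hderiv : ∀ r ∈ Ioi (0 : ℝ), HasDerivWithinAt f (c ^ α * (-α * r ^ (-α - 1))) (Ioi 0) r :=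
    fun r (hr : 0 < r) =>
      ((Real.hasDerivAt_rpow_const (Or.inl hr.ne')).const_mul (c ^ α)).hasDerivWithinAt
  calc ∫⁻ t in Ioi 0, g (f_inv t)
      = ∫⁻ t in f '' Ioi 0, g (f_inv t) := by rw [hbij.image_eq]
    _ = ∫⁻ r in Ioi 0, ENNReal.ofReal |c ^ α * (-α * r ^ (-α - 1))| * g (f_inv (f r)) :=
        lintegral_image_eq_lintegral_abs_deriv_mul measurableSet_Ioi hderiv hbij.injOn _
    _ = _ := by
        refine setLIntegral_congr_fun measurableSet_Ioi fun r (hr : 0 < r) => ?_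
        rw [hinv.1 hr, abs_mul, neg_mul, abs_neg, abs_of_pos (by positivity : 0 < c ^ α),
          abs_of_pos (by positivity : 0 < α * r ^ (-α - 1)), mul_comm (c ^ α)]

theorem lintegral_Ioc_mul_rpow_neg_sub_one {α a b : ℝ} (hα : 0 ≤ α) (ha : 0 < a) (hab : a ≤ b) :
    ∫⁻ r in Ioc a b, ENNReal.ofReal (α * r ^ (-α - 1)) =
      ENNReal.ofReal (a ^ (-α) - b ^ (-α)) := by
  have hpos : ∀ r ∈ uIcc a b, 0 < r := fun r hr => ha.trans_le (uIcc_of_le hab ▸ hr).1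
  have hderiv : ∀ r ∈ uIcc a b, HasDerivAt (fun r : ℝ => -r ^ (-α)) (α * r ^ (-α - 1)) r :=
    fun r hr => (Real.hasDerivAt_rpow_const (Or.inl (hpos r hr).ne')).neg.congr_deriv (by ring)
  have hint : IntervalIntegrable (fun r : ℝ => α * r ^ (-α - 1)) volume a b :=
    (continuousOn_const.mul (continuousOn_id.rpow_const fun r hr =>
      Or.inl (hpos r hr).ne')).intervalIntegrable
  rw [← ofReal_integral_eq_lintegral_ofReal hint.1
      ((ae_restrict_mem measurableSet_Ioc).mono fun r hr => by
        have : 0 < r := ha.trans hr.1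
        positivity),
    ← intervalIntegral.integral_of_le hab,
    intervalIntegral.integral_eq_sub_of_hasDerivAt hderiv hint]
  congr 1; ring

section Polar

variable {E : Type*} [NormedAddCommGroup E] [NormedSpace ℝ E]

theorem lintegral_Ioi_measure_rpow_neg_inv_smul_preimage [MeasurableSpace E] [BorelSpace E]
    {α : ℝ} (hα : 0 < α) (ν : Measure E) [SFinite ν] {B : Set E} (hB : MeasurableSet B)
    (h0B : (0 : E) ∉ B) :
    ∫⁻ t in Ioi (0 : ℝ), ν {x | t ^ (-(1 / α)) • x ∈ B} =
      ∫⁻ x, (∫⁻ r in Ioi (0 : ℝ),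
        B.indicator (fun _ => ENNReal.ofReal (α * r ^ (-α - 1) * ‖x‖ ^ α))
          (r • (‖x‖⁻¹ • x))) ∂ν := by
  have hpreimage : ∀ t : ℝ,
      ν {x | t ^ (-(1 / α)) • x ∈ B} = ∫⁻ x, B.indicator 1 (t ^ (-(1 / α)) • x) ∂ν := fun t => by
    change ν ((t ^ (-(1 / α)) • ·) ⁻¹' B) = _
    rw [← lintegral_indicator_one (measurable_const_smul (t ^ (-(1 / α))) hB)]
    rfl
  have hmeas : Measurable (Function.uncurry fun (t : ℝ) (x : E) =>
      B.indicator (1 : E → ℝ≥0∞) (t ^ (-(1 / α)) • x)) :=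
    (measurable_one.indicator hB).comp ((measurable_fst.pow_const _).smul measurable_snd)
  rw [lintegral_congr hpreimage, lintegral_lintegral_swap hmeas.aemeasurable]
  refine lintegral_congr fun x => ?_
  rcases eq_or_ne x 0 with rfl | hx
  · simp [h0B]
  · have hnorm : 0 < ‖x‖ := norm_pos_iff.2 hx
    have hsubst := lintegral_Ioi_comp_mul_rpow_neg_inv hα hnorm
      fun s => B.indicator 1 (s • (‖x‖⁻¹ • x))
    have hsmul (s : ℝ) : (‖x‖ * s) • ‖x‖⁻¹ • x = s • x := by
      rw [mul_comm, mul_smul, smul_inv_smul₀ hnorm.ne']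
    simp only [hsmul] at hsubst
    rw [hsubst]
    refine lintegral_congr fun r => ?_
    by_cases hr : r • ‖x‖⁻¹ • x ∈ B <;> simp [hr]

def polarSector (a b : ℝ) (C : Set E) : Set E := {y | ∃ r ∈ Ioc a b, ∃ ξ ∈ C, y = r • ξ}

variable {a b : ℝ} {C : Set E}

theorem mem_polarSector_iff (hC : C ⊆ Metric.sphere 0 1) (ha : 0 ≤ a) {y : E} :
    y ∈ polarSector a b C ↔ ‖y‖ ∈ Ioc a b ∧ ‖y‖⁻¹ • y ∈ C := by
  constructor
  · rintro ⟨r, hr, ξ, hξ, rfl⟩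
    have hr0 : 0 < r := ha.trans_lt hr.1
    have hnorm : ‖r • ξ‖ = r := by
      rw [norm_smul, mem_sphere_zero_iff_norm.1 (hC hξ), mul_one, Real.norm_of_nonneg hr0.le]
    rw [hnorm, inv_smul_smul₀ hr0.ne']
    exact ⟨hr, hξ⟩
  · rintro ⟨hy, hyC⟩
    exact ⟨‖y‖, hy, _, hyC, (smul_inv_smul₀ (ha.trans_lt hy.1).ne' y).symm⟩

theorem measurableSet_polarSector [MeasurableSpace E] [BorelSpace E]
    (hC : C ⊆ Metric.sphere 0 1) (hCm : MeasurableSet C) (ha : 0 ≤ a) :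
    MeasurableSet (polarSector a b C) := by
  have : polarSector a b C = norm ⁻¹' Ioc a b ∩ (fun y : E => ‖y‖⁻¹ • y) ⁻¹' C := by
    ext y
    exact mem_polarSector_iff hC ha
  rw [this]
  exact (measurable_norm measurableSet_Ioc).inter
    ((measurable_norm.inv.smul measurable_id) hCm)

theorem zero_notMem_polarSector (hC : C ⊆ Metric.sphere 0 1) (ha : 0 ≤ a) :
    (0 : E) ∉ polarSector a b C := by
  rw [mem_polarSector_iff hC ha, norm_zero]
  exact fun h => absurd h.1.1 (not_lt.2 ha)

theorem smul_normalize_mem_polarSector_iff (hC : C ⊆ Metric.sphere 0 1) (ha : 0 ≤ a) {r : ℝ}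
    (hr : 0 < r) (x : E) :
    r • ‖x‖⁻¹ • x ∈ polarSector a b C ↔ r ∈ Ioc a b ∧ ‖x‖⁻¹ • x ∈ C := by
  rcases eq_or_ne x 0 with rfl | hx
  · have h0C : (0 : E) ∉ C := fun h => by simpa using hC h
    simp [zero_notMem_polarSector hC ha, h0C]
  · have hnorm : ‖r • ‖x‖⁻¹ • x‖ = r := by
      rw [norm_smul, norm_smul, norm_inv, norm_norm, inv_mul_cancel₀ (norm_ne_zero_iff.2 hx),
        mul_one, Real.norm_of_nonneg hr.le]
    rw [mem_polarSector_iff hC ha, hnorm, inv_smul_smul₀ hr.ne']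

theorem lintegral_Ioi_indicator_polarSector {α : ℝ} (hα : 0 ≤ α) (hC : C ⊆ Metric.sphere 0 1)
    (ha : 0 < a) (hab : a ≤ b) (x : E) (c : ℝ) :
    ∫⁻ r in Ioi (0 : ℝ), (polarSector a b C).indicator
        (fun _ => ENNReal.ofReal (α * r ^ (-α - 1) * c)) (r • ‖x‖⁻¹ • x) =
      ENNReal.ofReal (a ^ (-α) - b ^ (-α)) *
        C.indicator (fun _ => ENNReal.ofReal c) (‖x‖⁻¹ • x) := by
  have hsplit : ∀ r ∈ Ioi (0 : ℝ), (polarSector a b C).indicator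
        (fun _ => ENNReal.ofReal (α * r ^ (-α - 1) * c)) (r • ‖x‖⁻¹ • x) =
      (Ioc a b).indicator (fun r => ENNReal.ofReal (α * r ^ (-α - 1))) r *
        C.indicator (fun _ => ENNReal.ofReal c) (‖x‖⁻¹ • x) := fun r (hr : 0 < r) => by
    have hnonneg : 0 ≤ α * r ^ (-α - 1) := by positivity
    rw [ENNReal.ofReal_mul hnonneg]
    by_cases hrab : r ∈ Ioc a b <;> by_cases hxC : ‖x‖⁻¹ • x ∈ C <;>
      simp [smul_normalize_mem_polarSector_iff hC ha.le hr x, hrab, hxC]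
  rw [setLIntegral_congr_fun measurableSet_Ioi hsplit,
    lintegral_mul_const _ ((by fun_prop : Measurable _).indicator measurableSet_Ioc),
    lintegral_indicator measurableSet_Ioc, Measure.restrict_restrict measurableSet_Ioc,
    inter_eq_left.2 (Ioc_subset_Ioi_self.trans (Ioi_subset_Ioi ha.le)),
    lintegral_Ioc_mul_rpow_neg_sub_one hα ha hab]

end Polar

theorem stmt9_general {d : ℕ} (α : ℝ) (hα0 : 0 < α)
    (ν : Measure (EuclideanSpace ℝ (Fin d))) [SigmaFinite ν] :
    (∀ B : Set (EuclideanSpace ℝ (Fin d)), MeasurableSet B →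
      (0 : EuclideanSpace ℝ (Fin d)) ∉ B →
      (∫⁻ t in Ioi (0:ℝ), ν {x | (t ^ (-(1/α))) • x ∈ B}) =
        ∫⁻ x, (∫⁻ r in Ioi (0:ℝ),
          B.indicator (fun _ => ENNReal.ofReal (α * r ^ (-α - 1) * ‖x‖ ^ α))
            (r • (‖x‖⁻¹ • x))) ∂ν) ∧
    ∀ (a b : ℝ), 0 < a → a < b →
      ∀ C : Set (EuclideanSpace ℝ (Fin d)),
        C ⊆ Metric.sphere (0 : EuclideanSpace ℝ (Fin d)) 1 → MeasurableSet C →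
        (∫⁻ t in Ioi (0:ℝ),
            ν {x | (t ^ (-(1/α))) • x ∈ {y | ∃ r ∈ Ioc a b, ∃ ξ ∈ C, y = r • ξ}}) =
          ENNReal.ofReal (a ^ (-α) - b ^ (-α)) *
            ∫⁻ x, C.indicator (fun _ => ENNReal.ofReal (‖x‖ ^ α)) (‖x‖⁻¹ • x) ∂ν := by
  refine ⟨fun B hB h0B => lintegral_Ioi_measure_rpow_neg_inv_smul_preimage hα0 ν hB h0B,
    fun a b ha hab C hC hCm => ?_⟩
  change ∫⁻ t in Ioi (0 : ℝ), ν {x | t ^ (-(1 / α)) • x ∈ polarSector a b C} = _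
  rw [lintegral_Ioi_measure_rpow_neg_inv_smul_preimage hα0 ν
      (measurableSet_polarSector hC hCm ha.le) (zero_notMem_polarSector hC ha.le),
    ← lintegral_const_mul' _ _ ENNReal.ofReal_ne_top]
  exact lintegral_congr fun x => lintegral_Ioi_indicator_polarSector hα0.le hC ha hab.le x _

/-- for `0 < α < 2` and a measure `ν` on `ℝ^d \ {0}`, the measure
`ν̃(B) = ∫_0^∞ ν({x : t^{-1/α} x ∈ B}) dt` satisfies
`ν̃(B) = ∫_{ℝ^d} ∫_0^∞ 1_B(r x/|x|) α r^{-α-1} |x|^α dr dν(x)`; in particular, for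
`0 < a < b` and Borel `C ⊆ S`,
`ν̃({rξ : r ∈ (a,b], ξ ∈ C}) = (a^{-α} - b^{-α}) ∫ 1_C(x/|x|) |x|^α dν(x)`. -/
theorem stmt9 {d : ℕ} (α : ℝ) (hα0 : 0 < α) (hα2 : α < 2)
    (ν : Measure (EuclideanSpace ℝ (Fin d))) [SigmaFinite ν]
    (h0 : ν {0} = 0) :
    (∀ B : Set (EuclideanSpace ℝ (Fin d)), MeasurableSet B →
      (0 : EuclideanSpace ℝ (Fin d)) ∉ B →
      (∫⁻ t in Ioi (0:ℝ), ν {x | (t ^ (-(1/α))) • x ∈ B}) =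
        ∫⁻ x, (∫⁻ r in Ioi (0:ℝ),
          B.indicator (fun _ => ENNReal.ofReal (α * r ^ (-α - 1) * ‖x‖ ^ α))
            (r • (‖x‖⁻¹ • x))) ∂ν) ∧
    ∀ (a b : ℝ), 0 < a → a < b →
      ∀ C : Set (EuclideanSpace ℝ (Fin d)),
        C ⊆ Metric.sphere (0 : EuclideanSpace ℝ (Fin d)) 1 → MeasurableSet C →
        (∫⁻ t in Ioi (0:ℝ),
            ν {x | (t ^ (-(1/α))) • x ∈ {y | ∃ r ∈ Ioc a b, ∃ ξ ∈ C, y = r • ξ}}) =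
          ENNReal.ofReal (a ^ (-α) - b ^ (-α)) *
            ∫⁻ x, C.indicator (fun _ => ENNReal.ofReal (‖x‖ ^ α)) (‖x‖⁻¹ • x) ∂ν :=
  stmt9_general α hα0 ν
end

section
/- Let 0 < α < 2 and let ν be a Borel measure on ℝ^d \ {0} with 0 < ∫ |x|^α dν(x) < ∞. Define ν̃(B) = ∫_0^∞ ν({x : t^{-1/α} x ∈ B}) dt. Then ν̃ has a polar decomposition ν̃(B) = ∫_S ∫_0^∞ 1_B(rξ) r^{−α−1} dr dλ(ξ), where λ(C) = α ∫_{ℝ^d} 1_C(x/|x|) |x|^α dν(x) is a finite measure on the unit sphere S. -/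
/-!
Fubini–Tonelli exchanges the integrals over `t` and `x`. For fixed `x ≠ 0` the substitution
`t = ‖x‖^α r^(-α)` turns `t^(-1/α) • x` into `r • (x / ‖x‖)` and `dt` into
`α ‖x‖^α r^(-α-1) dr`; integrating the weight `α ‖x‖^α` against `ν` after pushing forward along
`x ↦ x / ‖x‖` is integrating against `λ`. Finiteness of `λ` is finiteness of the `α`-th moment.
-/

open MeasureTheory Set
open scoped ENNReal

theorem lintegral_Ioi_eq_lintegral_Ioi_comp_mul_rpow {α c : ℝ} (hα : α ≠ 0) (hc : 0 < c)
    (g : ℝ → ℝ≥0∞) :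
    ∫⁻ t in Ioi 0, g t =
      ∫⁻ r in Ioi 0, ENNReal.ofReal (|α| * c * r ^ (-α - 1)) * g (c * r ^ (-α)) := by
  have himage : (fun r : ℝ => c * r ^ (-α)) '' Ioi 0 = Ioi 0 := by
    refine Subset.antisymm ?_ fun t (ht : 0 < t) => ?_
    · rintro _ ⟨r, hr : 0 < r, rfl⟩
      exact mul_pos hc (Real.rpow_pos_of_pos hr _)
    · refine ⟨(t / c) ^ (-α)⁻¹, Real.rpow_pos_of_pos (div_pos ht hc) _, ?_⟩
      simp only [Real.rpow_inv_rpow (div_pos ht hc).le (neg_ne_zero.mpr hα)]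
      field_simp
  have hderiv : ∀ r ∈ Ioi (0 : ℝ), HasDerivWithinAt (fun r : ℝ => c * r ^ (-α))
      (c * (-α * r ^ (-α - 1))) (Ioi 0) r := fun r (hr : 0 < r) =>
    ((Real.hasDerivAt_rpow_const (Or.inl hr.ne')).const_mul c).hasDerivWithinAt
  have hinj : InjOn (fun r : ℝ => c * r ^ (-α)) (Ioi 0) :=
    fun a (ha : 0 < a) b (hb : 0 < b) hab =>
      Real.rpow_left_injOn (neg_ne_zero.mpr hα) ha.le hb.le (mul_left_cancel₀ hc.ne' hab)
  conv_lhs => rw [← himage]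
  rw [lintegral_image_eq_lintegral_abs_deriv_mul measurableSet_Ioi hderiv hinj]
  refine setLIntegral_congr_fun measurableSet_Ioi fun r (hr : 0 < r) => ?_
  rw [abs_mul, abs_mul, abs_neg, abs_of_pos hc, abs_of_pos (Real.rpow_pos_of_pos hr _)]
  ring_nf

theorem rpow_mul_rpow_neg_rpow_neg_one_div {α a r : ℝ} (hα : α ≠ 0) (ha : 0 < a) (hr : 0 < r) :
    (a ^ α * r ^ (-α)) ^ (-(1 / α)) = r * a⁻¹ := by
  rw [Real.rpow_neg hr.le, ← div_eq_mul_inv, ← Real.div_rpow ha.le hr.le,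
    ← Real.rpow_mul (div_pos ha hr).le, mul_neg, mul_one_div_cancel hα, Real.rpow_neg_one,
    inv_div, div_eq_mul_inv]

section PolarDecomposition

variable {E : Type*} [NormedAddCommGroup E] [NormedSpace ℝ E]

theorem lintegral_Ioi_comp_rpow_smul {α : ℝ} (hα : 0 < α) {f : E → ℝ≥0∞} (hf : f 0 = 0)
    (x : E) :
    ∫⁻ t in Ioi (0 : ℝ), f (t ^ (-(1 / α)) • x) =
      ENNReal.ofReal (α * ‖x‖ ^ α) *
        ∫⁻ r in Ioi (0 : ℝ), ENNReal.ofReal (r ^ (-α - 1)) * f (r • ‖x‖⁻¹ • x) := by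
  rcases eq_or_ne x 0 with rfl | hx
  · simp [hf]
  have hxpos : 0 < ‖x‖ := norm_pos_iff.mpr hx
  rw [lintegral_Ioi_eq_lintegral_Ioi_comp_mul_rpow hα.ne' (Real.rpow_pos_of_pos hxpos α)
      (fun t => f (t ^ (-(1 / α)) • x)), ← lintegral_const_mul' _ _ ENNReal.ofReal_ne_top]
  refine setLIntegral_congr_fun measurableSet_Ioi fun r (hr : 0 < r) => ?_
  rw [rpow_mul_rpow_neg_rpow_neg_one_div hα.ne' hxpos hr, mul_smul, abs_of_pos hα,
    ← mul_assoc, ← ENNReal.ofReal_mul (by positivity)]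

variable [MeasurableSpace E] [BorelSpace E]

/-- The measure `λ` of the polar decomposition. Although `‖0‖⁻¹ • 0 = 0`, the density vanishes
at `0`, so `angularMeasure α ν` is carried by the unit sphere. -/
noncomputable def angularMeasure (α : ℝ) (ν : Measure E) : Measure E :=
  (ν.withDensity fun x => ENNReal.ofReal (α * ‖x‖ ^ α)).map fun x => ‖x‖⁻¹ • x

theorem measurable_inv_norm_smul : Measurable fun x : E => ‖x‖⁻¹ • x :=
  measurable_norm.inv.smul measurable_id

theorem angularMeasure_apply (α : ℝ) (ν : Measure E) {C : Set E} (hC : MeasurableSet C) :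
    angularMeasure α ν C =
      ∫⁻ x, C.indicator (fun _ => ENNReal.ofReal (α * ‖x‖ ^ α)) (‖x‖⁻¹ • x) ∂ν := by
  rw [angularMeasure, Measure.map_apply measurable_inv_norm_smul hC,
    withDensity_apply _ (measurable_inv_norm_smul hC),
    ← lintegral_indicator (measurable_inv_norm_smul hC)]
  rfl

theorem angularMeasure_univ {α : ℝ} (hα : 0 ≤ α) (ν : Measure E) :
    angularMeasure α ν univ = ENNReal.ofReal α * ∫⁻ x, ENNReal.ofReal (‖x‖ ^ α) ∂ν := by
  simp only [angularMeasure_apply α ν MeasurableSet.univ, indicator_univ, ENNReal.ofReal_mul hα]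
  exact lintegral_const_mul' _ _ ENNReal.ofReal_ne_top

theorem lintegral_angularMeasure {α : ℝ} (ν : Measure E) {g : E → ℝ≥0∞} (hg : Measurable g) :
    ∫⁻ ξ, g ξ ∂angularMeasure α ν = ∫⁻ x, ENNReal.ofReal (α * ‖x‖ ^ α) * g (‖x‖⁻¹ • x) ∂ν := by
  rw [angularMeasure, lintegral_map hg measurable_inv_norm_smul]
  exact lintegral_withDensity_eq_lintegral_mul _ (by fun_prop) (hg.comp measurable_inv_norm_smul)

variable [SecondCountableTopology E]

theorem lintegral_Ioi_lintegral_rpow_smul_eq_lintegral_angularMeasure {α : ℝ} (hα : 0 < α)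
    (ν : Measure E) [SFinite ν] {f : E → ℝ≥0∞} (hfm : Measurable f) (hf : f 0 = 0) :
    ∫⁻ t in Ioi (0 : ℝ), ∫⁻ x, f (t ^ (-(1 / α)) • x) ∂ν =
      ∫⁻ ξ, (∫⁻ r in Ioi (0 : ℝ), ENNReal.ofReal (r ^ (-α - 1)) * f (r • ξ))
        ∂angularMeasure α ν := by
  rw [lintegral_lintegral_swap (by fun_prop), lintegral_angularMeasure ν (by fun_prop)]
  exact lintegral_congr fun x => lintegral_Ioi_comp_rpow_smul hα hf x

end PolarDecomposition

theorem stmt10_general {d : ℕ} (α : ℝ) (hα0 : 0 < α)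
    (ν : Measure (EuclideanSpace ℝ (Fin d))) [SigmaFinite ν]
    (hfin : ∫⁻ x, ENNReal.ofReal (‖x‖ ^ α) ∂ν < ⊤)
    (lam : Measure (EuclideanSpace ℝ (Fin d)))
    (hlam : lam = Measure.map (fun x => ‖x‖⁻¹ • x)
      (ν.withDensity fun x => ENNReal.ofReal (α * ‖x‖ ^ α))) :
    (∀ C : Set (EuclideanSpace ℝ (Fin d)), MeasurableSet C →
      lam C = ∫⁻ x, C.indicator (fun _ => ENNReal.ofReal (α * ‖x‖ ^ α)) (‖x‖⁻¹ • x) ∂ν) ∧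
    lam Set.univ < ⊤ ∧
    ∀ B : Set (EuclideanSpace ℝ (Fin d)), MeasurableSet B →
      (0 : EuclideanSpace ℝ (Fin d)) ∉ B →
      (∫⁻ t in Ioi (0:ℝ), ν {x | (t ^ (-(1/α))) • x ∈ B}) =
        ∫⁻ ξ, (∫⁻ r in Ioi (0:ℝ),
          B.indicator (fun _ => ENNReal.ofReal (r ^ (-α - 1))) (r • ξ)) ∂lam := by
  obtain rfl : lam = angularMeasure α ν := hlam
  refine ⟨fun C hC => angularMeasure_apply α ν hC, ?_, fun B hB hB0 => ?_⟩
  · rw [angularMeasure_univ hα0.le]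
    exact ENNReal.mul_lt_top ENNReal.ofReal_lt_top hfin
  have hν_slice (t : ℝ) :
      ν {x | t ^ (-(1 / α)) • x ∈ B} = ∫⁻ x, B.indicator 1 (t ^ (-(1 / α)) • x) ∂ν :=
    (one_mul _).symm.trans (lintegral_indicator_const_comp (measurable_const_smul _) hB 1).symm
  have hindicator (c : ℝ≥0∞) (y : EuclideanSpace ℝ (Fin d)) :
      B.indicator (fun _ => c) y = c * B.indicator 1 y := by
    rw [← indicator_const_mul, Pi.one_def]
    simp only [mul_one]
  simp only [hν_slice, hindicator]
  exact lintegral_Ioi_lintegral_rpow_smul_eq_lintegral_angularMeasure hα0 ν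
    (measurable_one.indicator hB) (indicator_of_notMem hB0 _)

/-- for `0 < α < 2` and a measure `ν` on `ℝ^d \ {0}` with
`0 < ∫|x|^α dν < ∞`, the measure `ν̃(B) = ∫_0^∞ ν({x : t^{-1/α} x ∈ B}) dt` has the
polar decomposition `ν̃(B) = ∫_S ∫_0^∞ 1_B(rξ) r^{-α-1} dr dλ(ξ)`, where
`λ(C) = α ∫ 1_C(x/|x|) |x|^α dν(x)` is a finite measure on the unit sphere. -/
theorem stmt10 {d : ℕ} (α : ℝ) (hα0 : 0 < α) (hα2 : α < 2)
    (ν : Measure (EuclideanSpace ℝ (Fin d))) [SigmaFinite ν]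
    (h0 : ν {0} = 0)
    (hpos : 0 < ∫⁻ x, ENNReal.ofReal (‖x‖ ^ α) ∂ν)
    (hfin : ∫⁻ x, ENNReal.ofReal (‖x‖ ^ α) ∂ν < ⊤)
    (lam : Measure (EuclideanSpace ℝ (Fin d)))
    (hlam : lam = Measure.map (fun x => ‖x‖⁻¹ • x)
      (ν.withDensity fun x => ENNReal.ofReal (α * ‖x‖ ^ α))) :
    (∀ C : Set (EuclideanSpace ℝ (Fin d)), MeasurableSet C →
      lam C = ∫⁻ x, C.indicator (fun _ => ENNReal.ofReal (α * ‖x‖ ^ α)) (‖x‖⁻¹ • x) ∂ν) ∧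
    lam Set.univ < ⊤ ∧
    ∀ B : Set (EuclideanSpace ℝ (Fin d)), MeasurableSet B →
      (0 : EuclideanSpace ℝ (Fin d)) ∉ B →
      (∫⁻ t in Ioi (0:ℝ), ν {x | (t ^ (-(1/α))) • x ∈ B}) =
        ∫⁻ ξ, (∫⁻ r in Ioi (0:ℝ),
          B.indicator (fun _ => ENNReal.ofReal (r ^ (-α - 1))) (r • ξ)) ∂lam :=
  stmt10_general α hα0 ν hfin lam hlam
end

section
/- Let λ be a finite measure on the unit sphere S of ℝ^d with ∫_S ξ dλ(ξ) = 0, and let g : S → ℝ be measurable with ε₀ < g(ξ) < T₀ λ-a.e. for some 0 < ε₀ < 1 < T₀. Define the finite measure ν on ℝ^d by ν(B) = ∫_S 1_B(g(ξ)ξ) g(ξ)^{-1} dλ(ξ). Then ∫_{ℝ^d} x dν(x) = 0, ν is concentrated on the annulus {ε₀ < |x| < T₀}, and lim_{ε↓0, T↑∞} ∫_ε^T t^{-1} ( ∫_{ℝ^d} x 1_{|x| ≤ t} dν(x) ) dt = − ∫_S ξ log g(ξ) dλ(ξ). -/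
/-!
On the unit sphere `‖g(ξ) • ξ‖ = g(ξ)`, and the density `g⁻¹` cancels the dilation by `g`, so
`∫_{‖x‖ ≤ t} x dν = ∫ 1_{g(ξ) ≤ t} ξ dλ`. By Fubini the double integral over `t ∈ (ε, T]` becomes
`∫ (log T - log g(ξ)) ξ dλ` as soon as `ε < ε₀` and `T₀ < T`; the `log T` term vanishes since `λ`
has mean zero, so the limit is attained eventually.
-/

open MeasureTheory Filter Set

noncomputable section

theorem setIntegral_Ioc_indicator_Ici_inv {ε T a : ℝ} (hεa : ε < a) (ha : 0 < a) (haT : a ≤ T) :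
    ∫ t in Ioc ε T, (Ici a).indicator (fun t => t⁻¹) t = Real.log T - Real.log a := by
  have hIcc : Ioc ε T ∩ Ici a = Icc a T := by
    ext t
    simp only [mem_inter_iff, mem_Ioc, mem_Ici, mem_Icc]
    constructor
    · rintro ⟨⟨-, htT⟩, hat⟩; exact ⟨hat, htT⟩
    · rintro ⟨hat, htT⟩; exact ⟨⟨hεa.trans_le hat, htT⟩, hat⟩
  rw [setIntegral_indicator measurableSet_Ici, hIcc, integral_Icc_eq_integral_Ioc,
    ← intervalIntegral.integral_of_le haT, integral_inv_of_pos ha (ha.trans_le haT),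
    Real.log_div (ha.trans_le haT).ne' ha.ne']

section Fubini

variable {α E : Type*} [MeasurableSpace α] {μ : Measure α} [SFinite μ]
  [NormedAddCommGroup E] [NormedSpace ℝ E] [CompleteSpace E]

theorem setIntegral_Ioc_inv_smul_integral_indicator_le {h : α → ℝ} (hh : Measurable h)
    {v : α → E} (hv : Integrable v μ) {ε T : ℝ} (hε : 0 < ε) :
    ∫ t in Ioc ε T, t⁻¹ • ∫ ξ, {ξ | h ξ ≤ t}.indicator v ξ ∂μ
      = ∫ ξ, (∫ t in Ioc ε T, (Ici (h ξ)).indicator (fun t => t⁻¹) t) • v ξ ∂μ := by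
  set K : ℝ → α → ℝ := fun t ξ => (Ici (h ξ)).indicator (fun t => t⁻¹) t
  have hK : ∀ t ξ, t⁻¹ • {ξ | h ξ ≤ t}.indicator v ξ = K t ξ • v ξ := by
    intro t ξ
    by_cases hξ : h ξ ≤ t <;> simp [K, hξ]
  have hint : Integrable (Function.uncurry fun t ξ => K t ξ • v ξ)
      ((volume.restrict (Ioc ε T)).prod μ) := by
    have hKm : Measurable (Function.uncurry K) :=
      (measurable_fst.inv).indicator (measurableSet_le (hh.comp measurable_snd) measurable_fst)
    have hmem : ∀ᵐ p ∂(volume.restrict (Ioc ε T)).prod μ, p.1 ∈ Ioc ε T :=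
      Measure.quasiMeasurePreserving_fst.ae (ae_restrict_mem measurableSet_Ioc)
    refine Integrable.mono' ((hv.norm.const_mul ε⁻¹).comp_snd _)
      (hKm.aestronglyMeasurable.smul
        (hv.1.comp_quasiMeasurePreserving Measure.quasiMeasurePreserving_snd)) ?_
    filter_upwards [hmem] with p hp
    rw [Function.uncurry_apply_pair, norm_smul]
    gcongr
    simp only [K, indicator_apply, mem_Ici]
    split_ifs
    · rw [Real.norm_of_nonneg (inv_nonneg.2 (hε.trans hp.1).le)]
      exact inv_anti₀ hε hp.1.le
    · simpa using hε.le
  simp_rw [← integral_smul, hK]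
  rw [integral_integral_swap hint]
  simp_rw [integral_smul_const]
  rfl

end Fubini

section Radial

variable {E F : Type*} [NormedAddCommGroup E] [NormedSpace ℝ E] [MeasurableSpace E] [BorelSpace E]
  [SecondCountableTopology E] [NormedAddCommGroup F] [NormedSpace ℝ F]

def radialPushforward (lam : Measure E) (g : E → ℝ) : Measure E :=
  Measure.map (fun ξ => g ξ • ξ) (lam.withDensity fun ξ => ENNReal.ofReal (g ξ)⁻¹)

variable {lam : Measure E} {g : E → ℝ}

theorem integral_radialPushforward (hg : Measurable g) (hpos : ∀ᵐ ξ ∂lam, 0 < g ξ)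
    {φ : E → F} (hφ : StronglyMeasurable φ) :
    ∫ x, φ x ∂radialPushforward lam g = ∫ ξ, (g ξ)⁻¹ • φ (g ξ • ξ) ∂lam := by
  rw [radialPushforward, integral_map (φ := fun ξ => g ξ • ξ)
      (hg.smul measurable_id').aemeasurable hφ.aestronglyMeasurable,
    integral_withDensity_eq_integral_toReal_smul (f := fun ξ => ENNReal.ofReal (g ξ)⁻¹)
      hg.inv.ennreal_ofReal (.of_forall fun _ => ENNReal.ofReal_lt_top)]
  refine integral_congr_ae ?_
  filter_upwards [hpos] with ξ hξ
  rw [ENNReal.toReal_ofReal (inv_nonneg.2 hξ.le)]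

theorem integral_id_radialPushforward (hg : Measurable g) (hpos : ∀ᵐ ξ ∂lam, 0 < g ξ) :
    ∫ x, x ∂radialPushforward lam g = ∫ ξ, ξ ∂lam := by
  rw [integral_radialPushforward hg hpos (φ := fun x => x) measurable_id'.stronglyMeasurable]
  refine integral_congr_ae ?_
  filter_upwards [hpos] with ξ hξ
  simp [smul_smul, hξ.ne']

theorem setIntegral_norm_le_radialPushforward (hg : Measurable g) (hunit : ∀ᵐ ξ ∂lam, ‖ξ‖ = 1)
    (hpos : ∀ᵐ ξ ∂lam, 0 < g ξ) (t : ℝ) :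
    ∫ x in {x | ‖x‖ ≤ t}, x ∂radialPushforward lam g
      = ∫ ξ, {ξ | g ξ ≤ t}.indicator (fun ξ => ξ) ξ ∂lam := by
  have hmeas : MeasurableSet {x : E | ‖x‖ ≤ t} := measurableSet_le measurable_norm measurable_const
  rw [← integral_indicator hmeas,
    integral_radialPushforward hg hpos (measurable_id'.stronglyMeasurable.indicator hmeas)]
  refine integral_congr_ae ?_
  filter_upwards [hunit, hpos] with ξ hξ hgξ
  have hnorm : ‖g ξ • ξ‖ = g ξ := by rw [norm_smul, hξ, mul_one, Real.norm_of_nonneg hgξ.le]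
  by_cases ht : g ξ ≤ t
  · simp [indicator_of_mem, hnorm, ht, smul_smul, hgξ.ne']
  · simp [indicator_of_notMem, hnorm, ht]

theorem ae_norm_mem_radialPushforward (hg : Measurable g) (hunit : ∀ᵐ ξ ∂lam, ‖ξ‖ = 1)
    (hpos : ∀ᵐ ξ ∂lam, 0 < g ξ) {s : Set ℝ} (hs : MeasurableSet s) (hgs : ∀ᵐ ξ ∂lam, g ξ ∈ s) :
    ∀ᵐ x ∂radialPushforward lam g, ‖x‖ ∈ s := by
  rw [radialPushforward, ae_map_iff (f := fun ξ => g ξ • ξ) (hg.smul measurable_id').aemeasurable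
    (measurable_norm hs)]
  refine (withDensity_absolutelyContinuous _ _).ae_le ?_
  filter_upwards [hunit, hpos, hgs] with ξ hξ hgξ hξs
  rwa [norm_smul, hξ, mul_one, Real.norm_of_nonneg hgξ.le]

theorem setIntegral_Ioc_inv_smul_setIntegral_norm_le_radialPushforward [CompleteSpace E]
    [IsFiniteMeasure lam] (hg : Measurable g) (hunit : ∀ᵐ ξ ∂lam, ‖ξ‖ = 1) {ε T : ℝ} (hε : 0 < ε)
    (hbd : ∀ᵐ ξ ∂lam, ε < g ξ ∧ g ξ ≤ T) :
    ∫ t in Ioc ε T, t⁻¹ • ∫ x in {x | ‖x‖ ≤ t}, x ∂radialPushforward lam g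
      = Real.log T • ∫ ξ, ξ ∂lam - ∫ ξ, Real.log (g ξ) • ξ ∂lam := by
  have hpos : ∀ᵐ ξ ∂lam, 0 < g ξ := hbd.mono fun ξ hξ => hε.trans hξ.1
  have hid : Integrable (fun ξ : E => ξ) lam :=
    (integrable_const (1 : ℝ)).mono' aestronglyMeasurable_id (hunit.mono fun ξ hξ => hξ.le)
  have hlog : Integrable (fun ξ => Real.log (g ξ) • ξ) lam := by
    refine (integrable_const (|Real.log ε| + |Real.log T|)).mono'
      ((Real.measurable_log.comp hg).aestronglyMeasurable.smul aestronglyMeasurable_id) ?_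
    filter_upwards [hunit, hbd] with ξ hξ ⟨hεg, hgT⟩
    have hlow := Real.log_le_log hε hεg.le
    have hup := Real.log_le_log (hε.trans hεg) hgT
    rw [norm_smul, hξ, mul_one, Real.norm_eq_abs, abs_le]
    constructor <;> linarith [neg_abs_le (Real.log ε), le_abs_self (Real.log T),
      abs_nonneg (Real.log ε), abs_nonneg (Real.log T)]
  simp_rw [setIntegral_norm_le_radialPushforward hg hunit hpos]
  rw [setIntegral_Ioc_inv_smul_integral_indicator_le hg hid hε, ← integral_smul,
    ← integral_sub (f := fun ξ => Real.log T • ξ) (hid.smul _) hlog]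
  refine integral_congr_ae ?_
  filter_upwards [hbd] with ξ ⟨hεg, hgT⟩
  rw [setIntegral_Ioc_indicator_Ici_inv hεg (hε.trans hεg) hgT, sub_smul]

end Radial

theorem stmt16_general {d : ℕ}
    (lam : Measure (EuclideanSpace ℝ (Fin d))) [IsFiniteMeasure lam]
    (hsphere : lam (Metric.sphere (0 : EuclideanSpace ℝ (Fin d)) 1)ᶜ = 0)
    (hmean : ∫ ξ, ξ ∂lam = 0)
    (ε₀ T₀ : ℝ) (hε₀ : 0 < ε₀)
    (g : EuclideanSpace ℝ (Fin d) → ℝ) (hg : Measurable g)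
    (hbd : ∀ᵐ ξ ∂lam, ε₀ < g ξ ∧ g ξ < T₀)
    (ν : Measure (EuclideanSpace ℝ (Fin d)))
    (hν : ν = Measure.map (fun ξ => g ξ • ξ)
      (lam.withDensity fun ξ => ENNReal.ofReal (g ξ)⁻¹)) :
    (∫ x, x ∂ν = 0) ∧
    ν {x | ‖x‖ ≤ ε₀ ∨ T₀ ≤ ‖x‖} = 0 ∧
    Tendsto (fun p : ℝ × ℝ =>
        ∫ t in Ioc p.1 p.2, t⁻¹ • (∫ x in {x | ‖x‖ ≤ t}, x ∂ν))
      ((nhdsWithin (0:ℝ) (Ioi 0)) ×ˢ atTop)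
      (nhds (-∫ ξ, Real.log (g ξ) • ξ ∂lam)) := by
  have hunit : ∀ᵐ ξ ∂lam, ‖ξ‖ = 1 := by
    filter_upwards [mem_ae_iff.mpr hsphere] with ξ hξ using mem_sphere_zero_iff_norm.mp hξ
  have hpos : ∀ᵐ ξ ∂lam, 0 < g ξ := hbd.mono fun ξ hξ => hε₀.trans hξ.1
  change ν = radialPushforward lam g at hν
  subst hν
  refine ⟨by rw [integral_id_radialPushforward hg hpos, hmean], ?_, ?_⟩
  · refine measure_mono_null (fun x hx => ?_)
      (ae_iff.mp (ae_norm_mem_radialPushforward hg hunit hpos measurableSet_Ioo hbd))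
    simpa only [mem_ofPred_eq, mem_Ioo, not_and_or, not_lt] using hx
  · refine tendsto_const_nhds.congr' ?_
    filter_upwards [prod_mem_prod (Ioo_mem_nhdsGT hε₀) (Ioi_mem_atTop T₀)]
    rintro ⟨ε, T⟩ ⟨⟨hε, hεε₀⟩, hT⟩
    rw [setIntegral_Ioc_inv_smul_setIntegral_norm_le_radialPushforward hg hunit hε
      (hbd.mono fun ξ hξ => ⟨hεε₀.trans hξ.1, (hξ.2.trans hT).le⟩), hmean, smul_zero, zero_sub]

/-- let `λ` be a finite measure on the unit sphere of `ℝ^d` with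
`∫_S ξ dλ = 0` and let `g` be measurable with `ε₀ < g < T₀` λ-a.e.
(`0 < ε₀ < 1 < T₀`). Define `ν(B) = ∫_S 1_B(g(ξ)ξ) g(ξ)⁻¹ dλ(ξ)`, i.e. the
pushforward of `g⁻¹·λ` under `ξ ↦ g(ξ)ξ`.  Then `∫ x dν = 0`, `ν` is concentrated
on the annulus `{ε₀ < |x| < T₀}`, and
`lim_{ε↓0, T↑∞} ∫_ε^T t⁻¹ (∫ x 1_{|x|≤t} dν) dt = -∫_S ξ log g(ξ) dλ(ξ)`. -/
theorem stmt16 {d : ℕ}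
    (lam : Measure (EuclideanSpace ℝ (Fin d))) [IsFiniteMeasure lam]
    (hsphere : lam (Metric.sphere (0 : EuclideanSpace ℝ (Fin d)) 1)ᶜ = 0)
    (hmean : ∫ ξ, ξ ∂lam = 0)
    (ε₀ T₀ : ℝ) (hε₀ : 0 < ε₀) (hε₁ : ε₀ < 1) (hT₀ : 1 < T₀)
    (g : EuclideanSpace ℝ (Fin d) → ℝ) (hg : Measurable g)
    (hbd : ∀ᵐ ξ ∂lam, ε₀ < g ξ ∧ g ξ < T₀)
    (ν : Measure (EuclideanSpace ℝ (Fin d)))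
    (hν : ν = Measure.map (fun ξ => g ξ • ξ)
      (lam.withDensity fun ξ => ENNReal.ofReal (g ξ)⁻¹)) :
    (∫ x, x ∂ν = 0) ∧
    ν {x | ‖x‖ ≤ ε₀ ∨ T₀ ≤ ‖x‖} = 0 ∧
    Tendsto (fun p : ℝ × ℝ =>
        ∫ t in Ioc p.1 p.2, t⁻¹ • (∫ x in {x | ‖x‖ ≤ t}, x ∂ν))
      ((nhdsWithin (0:ℝ) (Ioi 0)) ×ˢ atTop)
      (nhds (-∫ ξ, Real.log (g ξ) • ξ ∂lam)) :=
  stmt16_general lam hsphere hmean ε₀ T₀ hε₀ g hg hbd ν hν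
end
end

section
/- Let 1 < α < 2, let λ₁ be a finite nonzero measure on the unit sphere S of ℝ^d, and let q : S → (0,∞) be measurable with ∫_S q(ξ) ξ dλ₁(ξ) = 0 and ∫_S q(ξ)^{α/(α−1)} dλ₁(ξ) < ∞. Define the measure ν on ℝ^d by ν(B) = ∫_S 1_B( q(ξ)^{1/(1−α)} ξ ) q(ξ)^{α/(α−1)} dλ₁(ξ). Then ν is a finite measure satisfying ∫ |x|^α dν(x) = λ₁(S) < ∞, ∫ x dν(x) = 0, and for every Borel C ⊆ S, ∫_{ℝ^d} 1_C(x/|x|) |x|^α dν(x) = λ₁(C). -/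
open MeasureTheory Filter Set

noncomputable section

/-- for `1 < α < 2`, a nonzero finite measure `λ₁` on the unit sphere,
and measurable `q : S → (0,∞)` with `∫_S q(ξ)ξ dλ₁ = 0` and
`∫_S q^{α/(α-1)} dλ₁ < ∞`, the measure
`ν(B) = ∫_S 1_B(q(ξ)^{1/(1-α)} ξ) q(ξ)^{α/(α-1)} dλ₁(ξ)` (the image of
`q^{α/(α-1)}·λ₁` under `ξ ↦ q(ξ)^{1/(1-α)} ξ`) is finite, satisfies
`∫|x|^α dν = λ₁(S)`, `∫ x dν = 0`, and `∫ 1_C(x/|x|)|x|^α dν = λ₁(C)` for every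
Borel `C ⊆ S`. -/
theorem stmt18 {d : ℕ} (α : ℝ) (hα1 : 1 < α) (hα2 : α < 2)
    (lam1 : Measure (EuclideanSpace ℝ (Fin d))) [IsFiniteMeasure lam1]
    (hne : lam1 ≠ 0)
    (hsphere : lam1 (Metric.sphere (0 : EuclideanSpace ℝ (Fin d)) 1)ᶜ = 0)
    (q : EuclideanSpace ℝ (Fin d) → ℝ) (hq : Measurable q) (hqpos : ∀ ξ, 0 < q ξ)
    (hint : Integrable (fun ξ => q ξ • ξ) lam1)
    (hmean : ∫ ξ, q ξ • ξ ∂lam1 = 0)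
    (hmom : (∫⁻ ξ, ENNReal.ofReal (q ξ ^ (α / (α - 1))) ∂lam1) < ⊤)
    (ν : Measure (EuclideanSpace ℝ (Fin d)))
    (hν : ν = Measure.map (fun ξ => (q ξ ^ (1 / (1 - α))) • ξ)
      (lam1.withDensity fun ξ => ENNReal.ofReal (q ξ ^ (α / (α - 1))))) :
    ν Set.univ < ⊤ ∧
    (∫⁻ x, ENNReal.ofReal (‖x‖ ^ α) ∂ν) = lam1 Set.univ ∧
    (∫ x, x ∂ν = 0) ∧
    ∀ C : Set (EuclideanSpace ℝ (Fin d)),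
      C ⊆ Metric.sphere (0 : EuclideanSpace ℝ (Fin d)) 1 → MeasurableSet C →
      (∫⁻ x, C.indicator (fun _ => ENNReal.ofReal (‖x‖ ^ α)) (‖x‖⁻¹ • x) ∂ν) = lam1 C := by
  have hαne : α - 1 ≠ 0 := sub_ne_zero.mpr hα1.ne'
  have hαne' : (1 : ℝ) - α ≠ 0 := by intro h; apply hαne; linarith
  set T : EuclideanSpace ℝ (Fin d) → EuclideanSpace ℝ (Fin d) :=
    fun ξ => (q ξ ^ (1 / (1 - α))) • ξ with hTdef
  have hTmeas : Measurable T :=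
    (hq.pow measurable_const).smul measurable_id
  have hwmeas : Measurable fun ξ => ENNReal.ofReal (q ξ ^ (α / (α - 1))) :=
    ENNReal.measurable_ofReal.comp (hq.pow measurable_const)
  have hae : ∀ᵐ ξ ∂lam1, ‖ξ‖ = 1 := by
    have hs : {ξ : EuclideanSpace ℝ (Fin d) | ¬ ‖ξ‖ = 1}
        = (Metric.sphere (0 : EuclideanSpace ℝ (Fin d)) 1)ᶜ := by
      ext ξ; simp [mem_sphere_zero_iff_norm]
    rw [ae_iff, hs]; exact hsphere
  have hc : ∀ ξ, (0:ℝ) < q ξ ^ (1 / (1 - α)) :=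
    fun ξ => Real.rpow_pos_of_pos (hqpos ξ) _
  have hnT : ∀ ξ : EuclideanSpace ℝ (Fin d), ‖ξ‖ = 1 → ‖T ξ‖ = q ξ ^ (1 / (1 - α)) := by
    intro ξ hξ
    rw [hTdef, norm_smul, Real.norm_eq_abs, abs_of_pos (hc ξ), hξ, mul_one]
  have hprod : ∀ ξ : EuclideanSpace ℝ (Fin d), ‖ξ‖ = 1 →
      ENNReal.ofReal (q ξ ^ (α / (α - 1))) * ENNReal.ofReal (‖T ξ‖ ^ α) = 1 := by
    intro ξ hξ
    rw [hnT ξ hξ, ← Real.rpow_mul (hqpos ξ).le,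
      ← ENNReal.ofReal_mul (Real.rpow_nonneg (hqpos ξ).le _),
      ← Real.rpow_add (hqpos ξ)]
    have he : α / (α - 1) + 1 / (1 - α) * α = 0 := by field_simp; ring
    rw [he, Real.rpow_zero, ENNReal.ofReal_one]
  have hdir : ∀ ξ : EuclideanSpace ℝ (Fin d), ‖ξ‖ = 1 → ‖T ξ‖⁻¹ • T ξ = ξ := by
    intro ξ hξ
    rw [hnT ξ hξ, hTdef, smul_smul, inv_mul_cancel₀ (hc ξ).ne', one_smul]
  refine ⟨?_, ?_, ?_, ?_⟩
  · rw [hν, Measure.map_apply hTmeas MeasurableSet.univ, Set.preimage_univ,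
      withDensity_apply _ MeasurableSet.univ, setLIntegral_univ]
    exact hmom
  · have hfm : Measurable fun x : EuclideanSpace ℝ (Fin d) => ENNReal.ofReal (‖x‖ ^ α) :=
      ENNReal.measurable_ofReal.comp (measurable_norm.pow measurable_const)
    have hfm' : Measurable fun ξ : EuclideanSpace ℝ (Fin d) =>
        ENNReal.ofReal (‖T ξ‖ ^ α) := hfm.comp hTmeas
    rw [hν, lintegral_map hfm hTmeas,
      lintegral_withDensity_eq_lintegral_mul _ hwmeas hfm']
    rw [← lintegral_one]
    refine lintegral_congr_ae (hae.mono fun ξ hξ => ?_)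
    simpa using hprod ξ hξ
  · have hid : AEStronglyMeasurable (fun x : EuclideanSpace ℝ (Fin d) => x)
        (Measure.map T (lam1.withDensity fun ξ => ENNReal.ofReal (q ξ ^ (α / (α - 1))))) :=
      aestronglyMeasurable_id
    rw [hν, integral_map hTmeas.aemeasurable hid]
    have hrfl : (lam1.withDensity fun ξ => ENNReal.ofReal (q ξ ^ (α / (α - 1))))
        = lam1.withDensity fun ξ =>
            ((Real.toNNReal (q ξ ^ (α / (α - 1))) : NNReal) : ENNReal) := rfl
    rw [hrfl, integral_withDensity_eq_integral_smul
        ((hq.pow measurable_const).real_toNNReal) T]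
    have hpt : ∀ ξ, (q ξ ^ (α / (α - 1))).toNNReal • T ξ = q ξ • ξ := by
      intro ξ
      rw [NNReal.smul_def, Real.coe_toNNReal _ (Real.rpow_nonneg (hqpos ξ).le _),
        hTdef, smul_smul, ← Real.rpow_add (hqpos ξ)]
      have he : α / (α - 1) + 1 / (1 - α) = 1 := by field_simp; ring
      rw [he, Real.rpow_one]
    simp_rw [hpt]
    exact hmean
  · intro C hCs hC
    have hGmeas : Measurable fun x : EuclideanSpace ℝ (Fin d) => ‖x‖⁻¹ • x :=
      (measurable_norm.inv).smul measurable_id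
    have hgeq : (fun x : EuclideanSpace ℝ (Fin d) =>
        C.indicator (fun _ => ENNReal.ofReal (‖x‖ ^ α)) (‖x‖⁻¹ • x))
        = ((fun x : EuclideanSpace ℝ (Fin d) => ‖x‖⁻¹ • x) ⁻¹' C).indicator
            (fun x => ENNReal.ofReal (‖x‖ ^ α)) := by
      ext x
      by_cases h : ‖x‖⁻¹ • x ∈ C <;>
        simp [Set.indicator_of_mem, Set.indicator_of_notMem, h]
    have hgmeas : Measurable fun x : EuclideanSpace ℝ (Fin d) =>
        C.indicator (fun _ => ENNReal.ofReal (‖x‖ ^ α)) (‖x‖⁻¹ • x) := by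
      rw [hgeq]
      exact (ENNReal.measurable_ofReal.comp
        (measurable_norm.pow measurable_const)).indicator (hGmeas hC)
    have hgmeas' : Measurable fun ξ : EuclideanSpace ℝ (Fin d) =>
        C.indicator (fun _ => ENNReal.ofReal (‖T ξ‖ ^ α)) (‖T ξ‖⁻¹ • T ξ) :=
      hgmeas.comp hTmeas
    rw [hν, lintegral_map hgmeas hTmeas,
      lintegral_withDensity_eq_lintegral_mul _ hwmeas hgmeas']
    rw [← lintegral_indicator_one hC]
    refine lintegral_congr_ae (hae.mono fun ξ hξ => ?_)
    simp only [Pi.mul_apply, Function.comp_apply]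
    rw [hdir ξ hξ]
    by_cases hmem : ξ ∈ C
    · rw [Set.indicator_of_mem hmem, Set.indicator_of_mem hmem, hprod ξ hξ]; rfl
    · rw [Set.indicator_of_notMem hmem, Set.indicator_of_notMem hmem, mul_zero]
end
end

section
/- Let ν be a Borel measure on ℝ^d \ {0} that is a mixture of Dirac measures along directions: ν(B) = ∫_S 1_B(g(ξ)ξ) g(ξ)^{-1} dλ(ξ) with λ finite on the unit sphere S and ε₀ < g < T₀ λ-a.e. (0 < ε₀ < 1 < T₀). Then the scaled superposition ν̃(B) = ∫_0^∞ ν({x : t^{-1}x ∈ B}) dt satisfies ν̃(B) = ∫_S ∫_0^∞ 1_B(rξ) r^{-2} dr dλ(ξ). -/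
/-!
Pushing `g⁻¹ • λ` forward along `ξ ↦ g(ξ) ξ` and integrating over the dilations `t⁻¹`, Tonelli
reduces the claim to one direction `ξ` at a time. There the substitution `t = g(ξ) / r` has
Jacobian `g(ξ) / r²`, and its factor `g(ξ)` cancels the density `g(ξ)⁻¹`, leaving the radial
density `r⁻²` whatever `g` is.
-/

open MeasureTheory Set
open scoped ENNReal

theorem lintegral_Ioi_comp_const_div (f : ℝ → ℝ≥0∞) {c : ℝ} (hc : 0 < c) :
    ∫⁻ t in Ioi 0, f t = ∫⁻ r in Ioi 0, ENNReal.ofReal (c / r ^ 2) * f (c / r) := by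
  have himage : (c / ·) '' Ioi (0 : ℝ) = Ioi 0 := by
    ext t
    refine ⟨?_, fun ht => ⟨c / t, div_pos hc ht, div_div_cancel₀ hc.ne'⟩⟩
    rintro ⟨r, hr, rfl⟩
    exact div_pos hc hr
  have hderiv : ∀ r ∈ Ioi (0 : ℝ), HasDerivWithinAt (c / ·) (-(c / r ^ 2)) (Ioi 0) r := by
    intro r hr
    simpa [div_eq_mul_inv] using ((hasDerivAt_inv (ne_of_gt hr)).const_mul c).hasDerivWithinAt
  have hinj : InjOn (c / ·) (Ioi (0 : ℝ)) := fun a ha b hb h =>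
    (mul_left_cancel₀ hc.ne' ((div_eq_div_iff (ne_of_gt ha) (ne_of_gt hb)).mp h)).symm
  have hcov := lintegral_image_eq_lintegral_abs_deriv_mul measurableSet_Ioi hderiv hinj f
  rw [himage] at hcov
  rw [hcov]
  refine setLIntegral_congr_fun measurableSet_Ioi fun r _ => ?_
  rw [abs_neg, abs_of_nonneg (by positivity)]

theorem lintegral_Ioi_indicator_inv_smul_smul {E : Type*} [MulAction ℝ E] (B : Set E) {c : ℝ}
    (hc : 0 < c) (x : E) :
    ∫⁻ t in Ioi (0 : ℝ), B.indicator (fun _ => ENNReal.ofReal c⁻¹) (t⁻¹ • c • x) =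
      ∫⁻ r in Ioi (0 : ℝ), B.indicator (fun _ => ENNReal.ofReal (r ^ (-2 : ℝ))) (r • x) := by
  rw [lintegral_Ioi_comp_const_div _ hc]
  refine setLIntegral_congr_fun measurableSet_Ioi fun r (hr : 0 < r) => ?_
  have hsmul : (c / r)⁻¹ • c • x = r • x := by
    rw [smul_smul, inv_div, div_mul_cancel₀ _ hc.ne']
  have hdensity : c / r ^ 2 * c⁻¹ = r ^ (-2 : ℝ) := by
    rw [Real.rpow_neg hr.le, Real.rpow_two]
    field_simp
  rw [hsmul]
  by_cases hmem : r • x ∈ B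
  · rw [indicator_of_mem hmem, indicator_of_mem hmem, ← ENNReal.ofReal_mul (by positivity),
      hdensity]
  · rw [indicator_of_notMem hmem, indicator_of_notMem hmem, mul_zero]

theorem map_withDensity_apply_eq_lintegral_indicator {α β : Type*} [MeasurableSpace α]
    [MeasurableSpace β] (μ : Measure α) {φ : α → β} (hφ : Measurable φ) (f : α → ℝ≥0∞)
    {S : Set β} (hS : MeasurableSet S) :
    (μ.withDensity f).map φ S = ∫⁻ x, S.indicator (fun _ => f x) (φ x) ∂μ := by
  rw [Measure.map_apply hφ hS, withDensity_apply _ (hφ hS), ← lintegral_indicator (hφ hS)]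
  rfl

theorem stmt19_general {d : ℕ}
    (lam : Measure (EuclideanSpace ℝ (Fin d))) [IsFiniteMeasure lam]
    (ε₀ T₀ : ℝ) (hε₀ : 0 < ε₀)
    (g : EuclideanSpace ℝ (Fin d) → ℝ) (hg : Measurable g)
    (hbd : ∀ᵐ ξ ∂lam, ε₀ < g ξ ∧ g ξ < T₀)
    (ν : Measure (EuclideanSpace ℝ (Fin d)))
    (hν : ν = Measure.map (fun ξ => g ξ • ξ)
      (lam.withDensity fun ξ => ENNReal.ofReal (g ξ)⁻¹))
    (B : Set (EuclideanSpace ℝ (Fin d))) (hB : MeasurableSet B) :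
    (∫⁻ t in Ioi (0:ℝ), ν {x | t⁻¹ • x ∈ B}) =
      ∫⁻ ξ, (∫⁻ r in Ioi (0:ℝ),
        B.indicator (fun _ => ENNReal.ofReal (r ^ (-2 : ℝ))) (r • ξ)) ∂lam := by
  have hφ : Measurable fun ξ : EuclideanSpace ℝ (Fin d) => g ξ • ξ := hg.smul measurable_id
  have hjoint : Measurable fun p : ℝ × EuclideanSpace ℝ (Fin d) =>
      B.indicator (fun _ => ENNReal.ofReal (g p.2)⁻¹) (p.1⁻¹ • g p.2 • p.2) :=
    (hg.comp measurable_snd).inv.ennreal_ofReal.indicator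
      (hB.preimage (measurable_fst.inv.smul (hφ.comp measurable_snd)))
  calc (∫⁻ t in Ioi (0:ℝ), ν {x | t⁻¹ • x ∈ B})
      = ∫⁻ t in Ioi (0:ℝ), ∫⁻ ξ,
          B.indicator (fun _ => ENNReal.ofReal (g ξ)⁻¹) (t⁻¹ • g ξ • ξ) ∂lam := by
        subst hν
        exact lintegral_congr fun t => map_withDensity_apply_eq_lintegral_indicator lam hφ _
          (hB.preimage (measurable_const_smul t⁻¹))
    _ = ∫⁻ ξ, (∫⁻ t in Ioi (0:ℝ),
          B.indicator (fun _ => ENNReal.ofReal (g ξ)⁻¹) (t⁻¹ • g ξ • ξ)) ∂lam :=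
        lintegral_lintegral_swap hjoint.aemeasurable
    _ = _ := by
        refine lintegral_congr_ae ?_
        filter_upwards [hbd] with ξ hξ
        exact lintegral_Ioi_indicator_inv_smul_smul B (hε₀.trans hξ.1) ξ

/-- let `ν(B) = ∫_S 1_B(g(ξ)ξ) g(ξ)⁻¹ dλ(ξ)` (the pushforward of
`g⁻¹·λ` under `ξ ↦ g(ξ)ξ`), with `λ` finite on the unit sphere and `ε₀ < g < T₀`
λ-a.e. Then the scaled superposition `ν̃(B) = ∫_0^∞ ν({x : t⁻¹x ∈ B}) dt` satisfies
`ν̃(B) = ∫_S ∫_0^∞ 1_B(rξ) r^{-2} dr dλ(ξ)`. -/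
theorem stmt19 {d : ℕ}
    (lam : Measure (EuclideanSpace ℝ (Fin d))) [IsFiniteMeasure lam]
    (hsphere : lam (Metric.sphere (0 : EuclideanSpace ℝ (Fin d)) 1)ᶜ = 0)
    (ε₀ T₀ : ℝ) (hε₀ : 0 < ε₀) (hε₁ : ε₀ < 1) (hT₀ : 1 < T₀)
    (g : EuclideanSpace ℝ (Fin d) → ℝ) (hg : Measurable g)
    (hbd : ∀ᵐ ξ ∂lam, ε₀ < g ξ ∧ g ξ < T₀)
    (ν : Measure (EuclideanSpace ℝ (Fin d)))
    (hν : ν = Measure.map (fun ξ => g ξ • ξ)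
      (lam.withDensity fun ξ => ENNReal.ofReal (g ξ)⁻¹))
    (B : Set (EuclideanSpace ℝ (Fin d))) (hB : MeasurableSet B)
    (hB0 : (0 : EuclideanSpace ℝ (Fin d)) ∉ B) :
    (∫⁻ t in Ioi (0:ℝ), ν {x | t⁻¹ • x ∈ B}) =
      ∫⁻ ξ, (∫⁻ r in Ioi (0:ℝ),
        B.indicator (fun _ => ENNReal.ofReal (r ^ (-2 : ℝ))) (r • ξ)) ∂lam :=
  stmt19_general lam ε₀ T₀ hε₀ g hg hbd ν hν B hB
end
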